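/- arXiv:1311.2292 — 13 statements merged into one kernel-verified Lean document; each statement's English description precedes it below -/
import Mathlib

section
/- Let α, β be commutative ring elements and define P_n by P_0(x)=1, P_1(x)=x-(α+β), P_n(x)=(x-α)P_{n-1}(x)-βx P_{n-2}(x). Then for each n, P_n(x) = ∑_{k=0}^n d_{n,k} x^k where d_{n,k} is the coefficient of x^n in ((1-βx)/(1+αx)) · (x(1-βx)/(1+αx))^k, i.e., the coefficient array of the P_n is the Riordan array ((1-βx)/(1+αx), x(1-βx)/(1+αx)). -/
/-!
With `g = (1 - βX)/(1 + αX)`, the `k`-th column `c_k = g (X g)^k` of the Riordan array satisfies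
`(1 + αX) c_0 = 1 - βX` and `(1 + αX) c_{k+1} = X (1 - βX) c_k`. Reading off the coefficient of
`X^(n+2)` gives exactly the recurrence for the coefficient of `x^k` in `P_(n+2)`, so the two arrays
agree by two-step induction on `n` once the rows `n = 0, 1` are checked.
-/

open PowerSeries

namespace LaurentBiorthogonal

variable {R : Type*} [CommRing R] (α β : R)

noncomputable def g : R⟦X⟧ := (1 - C β * X) * invOfUnit (1 + C α * X) 1

/-- The `k`-th column `g · (X g)^k` of the Riordan array `(g, X g)`. -/
noncomputable def column (k : ℕ) : R⟦X⟧ := g α β * (X * g α β) ^ k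

theorem one_add_C_mul_X_mul_g : (1 + C α * X) * g α β = 1 - C β * X := by
  rw [g, mul_left_comm, mul_invOfUnit _ _ (by simp), mul_one]

theorem constantCoeff_g : constantCoeff (g α β) = 1 := by
  simp [g, constantCoeff_invOfUnit]

theorem one_add_C_mul_X_mul_column_zero : (1 + C α * X) * column α β 0 = 1 - C β * X := by
  rw [column, pow_zero, mul_one, one_add_C_mul_X_mul_g]

theorem one_add_C_mul_X_mul_column_succ (k : ℕ) :
    (1 + C α * X) * column α β (k + 1) = X * ((1 - C β * X) * column α β k) := by
  rw [← one_add_C_mul_X_mul_g α β, column, column]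
  ring

theorem coeff_succ_of_one_add_C_mul_X_mul_eq {a : R} {f h : R⟦X⟧} (hf : (1 + C a * X) * f = h)
    (n : ℕ) : coeff (n + 1) f = coeff (n + 1) h - a * coeff n f := by
  rw [← hf, add_mul, one_mul, mul_assoc, map_add, coeff_C_mul, coeff_succ_X_mul]
  ring

theorem constantCoeff_column (k : ℕ) : constantCoeff (column α β k) = if k = 0 then 1 else 0 := by
  cases k <;> simp [column, constantCoeff_g, mul_pow]

theorem coeff_succ_column_zero (n : ℕ) :
    coeff (n + 1) (column α β 0) = coeff (n + 1) (1 - C β * X) - α * coeff n (column α β 0) :=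
  coeff_succ_of_one_add_C_mul_X_mul_eq (one_add_C_mul_X_mul_column_zero α β) n

theorem coeff_succ_column_succ (n k : ℕ) :
    coeff (n + 1) (column α β (k + 1)) =
      coeff n ((1 - C β * X) * column α β k) - α * coeff n (column α β (k + 1)) := by
  rw [coeff_succ_of_one_add_C_mul_X_mul_eq (one_add_C_mul_X_mul_column_succ α β k),
    coeff_succ_X_mul]

end LaurentBiorthogonal

open LaurentBiorthogonal in
/-- The coefficient array of the Laurent biorthogonal polynomials `P_n` with
`P_0 = 1`, `P_1 = x - (α+β)`, `P_n = (x-α)P_{n-1} - βx P_{n-2}` is the Riordan array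
`((1-βx)/(1+αx), x(1-βx)/(1+αx))`. -/
theorem laurent_biorthogonal_coeff_array {R : Type*} [CommRing R] (α β : R)
    (P : ℕ → Polynomial R)
    (hP0 : P 0 = 1)
    (hP1 : P 1 = Polynomial.X - Polynomial.C (α + β))
    (hPrec : ∀ n, P (n + 2) =
      (Polynomial.X - Polynomial.C α) * P (n + 1) - Polynomial.C β * Polynomial.X * P n) :
    ∀ n k : ℕ, (P n).coeff k =
      PowerSeries.coeff n
        (((1 - PowerSeries.C β * PowerSeries.X) *
            PowerSeries.invOfUnit (1 + PowerSeries.C α * PowerSeries.X) 1) *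
          (PowerSeries.X * (1 - PowerSeries.C β * PowerSeries.X) *
            PowerSeries.invOfUnit (1 + PowerSeries.C α * PowerSeries.X) 1) ^ k) := by
  simp_rw [mul_assoc X]
  change ∀ n k, (P n).coeff k = coeff n (column α β k)
  intro n
  induction n using Nat.twoStepInduction with
  | zero => simp [hP0, constantCoeff_column, Polynomial.coeff_one]
  | one =>
    rintro (_ | k)
    · simp [hP1, coeff_succ_column_zero, constantCoeff_column]
      ring
    · simp [hP1, coeff_succ_column_succ, constantCoeff_column, Polynomial.coeff_X]
  | more n ih₀ ih₁ =>
    rintro (_ | k)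
    · simp [hPrec, coeff_succ_column_zero, ih₁, coeff_one]
    · simp [hPrec, coeff_succ_column_succ, sub_mul, mul_assoc,
        Polynomial.coeff_X_mul, Polynomial.coeff_C_mul, ih₀, ih₁]
      ring
end

section
/- Let α, β be commutative ring elements and define Q_n by Q_0(x)=1, Q_1(x)=x-α, Q_n(x)=(x-α)Q_{n-1}(x)-βx Q_{n-2}(x). Then the coefficient array of the Q_n is the Riordan array (1/(1+αx), x(1-βx)/(1+αx)): that is, for each n, the coefficient of x^k in Q_n equals the coefficient of x^n in (1/(1+αx)) · (x(1-βx)/(1+αx))^k. -/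
/-!
Let `d = 1 + αx`, `g = 1/d` and `h = x(1 - βx)g`. Since `d g = 1`, the columns `g hᵏ` of the
Riordan array satisfy `d · g hᵏ⁺¹ = x(1 - βx) · g hᵏ`; reading off the coefficient of `xⁿ⁺¹`
gives `T(n+1, k+1) = T(n, k) - α T(n, k+1) - β T(n-1, k)`, which is exactly the recurrence
satisfied by the coefficients of `Qₙ`, and the initial rows agree.
-/

open PowerSeries

namespace PowerSeries

variable {R : Type*} [CommRing R]

noncomputable def riordanArray (g h : R⟦X⟧) (n k : ℕ) : R := coeff n (g * h ^ k)

theorem riordanArray_zero_zero (g h : R⟦X⟧) : riordanArray g h 0 0 = constantCoeff g := by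
  simp [riordanArray]

theorem riordanArray_zero_succ (g : R⟦X⟧) {h : R⟦X⟧} (hh : constantCoeff h = 0) (k : ℕ) :
    riordanArray g h 0 (k + 1) = 0 := by
  simp [riordanArray, hh]

theorem coeff_succ_one_add_C_mul_X_mul (a : R) (n : ℕ) (F : R⟦X⟧) :
    coeff (n + 1) ((1 + C a * X) * F) = coeff (n + 1) F + a * coeff n F := by
  rw [add_mul, one_mul, map_add, mul_assoc, coeff_C_mul, coeff_succ_X_mul]

section LaurentBiorthogonal

variable {α β : R} {g : R⟦X⟧}

theorem constantCoeff_eq_one_of_one_add_C_mul_X_mul_eq_one (hg : (1 + C α * X) * g = 1) :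
    constantCoeff g = 1 := by
  simpa using congrArg constantCoeff hg

theorem coeff_succ_eq_of_one_add_C_mul_X_mul_eq_one (hg : (1 + C α * X) * g = 1) (n : ℕ) :
    coeff (n + 1) g = -α * coeff n g := by
  have h := congrArg (coeff (n + 1)) hg
  rw [coeff_succ_one_add_C_mul_X_mul, coeff_one, if_neg n.succ_ne_zero] at h
  linear_combination h

theorem one_add_C_mul_X_mul_riordan_column_succ (hg : (1 + C α * X) * g = 1) (k : ℕ) :
    (1 + C α * X) * (g * (X * (1 - C β * X) * g) ^ (k + 1)) =
      X * (g * (X * (1 - C β * X) * g) ^ k)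
        - C β * (X * (X * (g * (X * (1 - C β * X) * g) ^ k))) := by
  linear_combination (X * (1 - C β * X) * g * (X * (1 - C β * X) * g) ^ k) * hg

theorem riordanArray_succ_zero (hg : (1 + C α * X) * g = 1) (h : R⟦X⟧) (n : ℕ) :
    riordanArray g h (n + 1) 0 = -α * riordanArray g h n 0 := by
  simpa [riordanArray] using coeff_succ_eq_of_one_add_C_mul_X_mul_eq_one hg n

/-- The last term is `T(n-1, k)`, read as `0` when `n = 0`. -/
theorem riordanArray_succ_succ (hg : (1 + C α * X) * g = 1) (n k : ℕ) :
    riordanArray g (X * (1 - C β * X) * g) (n + 1) (k + 1) =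
      riordanArray g (X * (1 - C β * X) * g) n k
        - α * riordanArray g (X * (1 - C β * X) * g) n (k + 1)
        - β * coeff n (X * (g * (X * (1 - C β * X) * g) ^ k)) := by
  have h := congrArg (coeff (n + 1)) (one_add_C_mul_X_mul_riordan_column_succ (β := β) hg k)
  rw [coeff_succ_one_add_C_mul_X_mul, map_sub, coeff_succ_X_mul, coeff_C_mul,
    coeff_succ_X_mul] at h
  simp only [riordanArray]
  linear_combination h

end LaurentBiorthogonal

end PowerSeries

namespace Polynomial

variable {R : Type*} [CommRing R] (α β : R) (p q : R[X])

theorem coeff_zero_X_sub_C_mul_sub_C_mul_X_mul :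
    ((X - C α) * p - C β * X * q).coeff 0 = -α * p.coeff 0 := by
  simp [mul_coeff_zero]

theorem coeff_succ_X_sub_C_mul_sub_C_mul_X_mul (k : ℕ) :
    ((X - C α) * p - C β * X * q).coeff (k + 1) =
      p.coeff k - α * p.coeff (k + 1) - β * q.coeff k := by
  rw [coeff_sub, sub_mul, coeff_sub, coeff_X_mul, coeff_C_mul, mul_assoc, coeff_C_mul, coeff_X_mul]

end Polynomial

/-- The coefficient array of the Laurent biorthogonal polynomials `Q_n` with
`Q_0 = 1`, `Q_1 = x - α`, `Q_n = (x-α)Q_{n-1} - βx Q_{n-2}` is the Riordan array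
`(1/(1+αx), x(1-βx)/(1+αx))`. -/
theorem laurent_biorthogonal_coeff_array' {R : Type*} [CommRing R] (α β : R)
    (Q : ℕ → Polynomial R)
    (hQ0 : Q 0 = 1)
    (hQ1 : Q 1 = Polynomial.X - Polynomial.C α)
    (hQrec : ∀ n, Q (n + 2) =
      (Polynomial.X - Polynomial.C α) * Q (n + 1) - Polynomial.C β * Polynomial.X * Q n) :
    ∀ n k : ℕ, (Q n).coeff k =
      PowerSeries.coeff n
        ((PowerSeries.invOfUnit (1 + PowerSeries.C α * PowerSeries.X) 1) *
          (PowerSeries.X * (1 - PowerSeries.C β * PowerSeries.X) *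
            PowerSeries.invOfUnit (1 + PowerSeries.C α * PowerSeries.X) 1) ^ k) := by
  set g := invOfUnit (1 + C α * X) 1
  have hg : (1 + C α * X) * g = 1 := mul_invOfUnit _ _ (by simp)
  have hg0 := constantCoeff_eq_one_of_one_add_C_mul_X_mul_eq_one hg
  have hh0 : constantCoeff (X * (1 - C β * X) * g) = 0 := by simp
  change ∀ n k, (Q n).coeff k = riordanArray g (X * (1 - C β * X) * g) n k
  intro n
  induction n using Nat.twoStepInduction with
  | zero =>
    rintro (_ | k)
    · simp [hQ0, riordanArray_zero_zero, hg0]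
    · simp [hQ0, riordanArray_zero_succ g hh0, Polynomial.coeff_one]
  | one =>
    rintro (_ | _ | k)
    · simp [hQ1, riordanArray_succ_zero hg, riordanArray_zero_zero, hg0]
    · simp [hQ1, riordanArray_succ_succ hg, riordanArray_zero_zero, riordanArray_zero_succ g hh0,
        hg0, Polynomial.coeff_X]
    · simp [hQ1, riordanArray_succ_succ hg, riordanArray_zero_succ g hh0, Polynomial.coeff_X]
  | more n ih ih' =>
    rintro (_ | k)
    · rw [hQrec, Polynomial.coeff_zero_X_sub_C_mul_sub_C_mul_X_mul, ih',
        riordanArray_succ_zero hg _ (n + 1)]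
    · rw [hQrec, Polynomial.coeff_succ_X_sub_C_mul_sub_C_mul_X_mul, ih', ih', ih,
        riordanArray_succ_succ hg (n + 1), coeff_succ_X_mul]
      rfl
end

section
/- With P_n defined by P_0=1, P_1=x-(α+β), P_n=(x-α)P_{n-1}-βx P_{n-2}, the coefficients are given explicitly by: the coefficient of x^k in P_n(x) equals (-1)^{n-k} ∑_{j=0}^{k+1} C(k+1,j) C(n-j, n-k-j) α^{n-k-j} β^j, for 0 ≤ k ≤ n. -/
/-- Binomial coefficient on integer arguments, vanishing when `b < 0` or `b > a`. -/
def intChoose (a b : ℤ) : ℤ :=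
  if 0 ≤ b ∧ b ≤ a then ((a.toNat).choose b.toNat : ℤ) else 0

lemma intChoose_neg {a b : ℤ} (h : b < 0) : intChoose a b = 0 := by
  simp only [intChoose, if_neg (by omega : ¬(0 ≤ b ∧ b ≤ a))]
lemma intChoose_gt {a b : ℤ} (h : a < b) : intChoose a b = 0 := by
  simp only [intChoose, if_neg (by omega : ¬(0 ≤ b ∧ b ≤ a))]
lemma intChoose_self {a : ℤ} (h : 0 ≤ a) : intChoose a a = 1 := by
  simp [intChoose, h]
lemma intChoose_zero' {a : ℤ} (h : 0 ≤ a) : intChoose a 0 = 1 := by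
  simp [intChoose, h]

lemma intChoose_pascal (a b : ℤ) (h : ¬(a = -1 ∧ b = 0)) :
    intChoose (a + 1) b = intChoose a b + intChoose a (b - 1) := by
  rcases lt_or_ge b 0 with hb | hb
  · rw [intChoose_neg hb, intChoose_neg hb, intChoose_neg (by omega)]; ring
  rcases lt_or_ge a (-1) with ha | ha
  · rw [intChoose_gt (by omega : a + 1 < b), intChoose_gt (by omega : a < b),
      intChoose_gt (by omega : a < b - 1)]
    ring
  rcases eq_or_lt_of_le ha with ha1 | ha1
  · rw [intChoose_gt (by omega : a + 1 < b), intChoose_gt (by omega : a < b),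
      intChoose_gt (by omega : a < b - 1)]
    ring
  rcases eq_or_lt_of_le hb with hb0 | hb1
  · subst hb0
    rw [intChoose_zero' (by omega), intChoose_zero' (by omega), intChoose_neg (by omega)]; ring
  rcases lt_or_ge (a + 1) b with h2 | h2
  · rw [intChoose_gt (by omega : a + 1 < b), intChoose_gt (by omega : a < b),
      intChoose_gt (by omega : a < b - 1)]
    ring
  obtain ⟨m, rfl⟩ : ∃ m : ℕ, a = m := ⟨a.toNat, by omega⟩
  obtain ⟨t, ht⟩ : ∃ t : ℕ, b = (t : ℤ) + 1 := ⟨(b - 1).toNat, by omega⟩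
  subst ht
  rcases eq_or_lt_of_le h2 with hba | hba
  · have : m = t := by omega
    subst this
    have e3 : ((m:ℤ) + 1 - 1) = m := by ring
    rw [e3, intChoose_self (by omega : (0:ℤ) ≤ (m:ℤ) + 1),
      intChoose_gt (by omega : (m:ℤ) < (m:ℤ) + 1), intChoose_self (by omega : (0:ℤ) ≤ (m:ℤ))]
    ring
  · unfold intChoose
    rw [if_pos ⟨by omega, by omega⟩, if_pos ⟨by omega, by omega⟩, if_pos ⟨by omega, by omega⟩]
    have h1 : ((m:ℤ) + 1).toNat = m + 1 := by omega
    have h2' : (((t:ℤ) + 1)).toNat = t + 1 := by omega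
    have h3 : (((t:ℤ) + 1 - 1)).toNat = t := by omega
    have h4 : ((m:ℤ)).toNat = m := by omega
    rw [h1, h2', h3, h4, Nat.choose_succ_succ]
    push_cast; ring

section
variable {M : Type*} [AddCommMonoid M]

lemma sum_shift_combine (f g h e : ℕ → M) (m : ℕ)
    (hf0 : f 0 = g 0 + h 0)
    (hstep : ∀ i < m + 1, f (i+1) = g (i+1) + h (i+1) + e i)
    (hgtop : g (m+1) = 0) :
    ∑ j ∈ Finset.range (m+2), f j
      = (∑ j ∈ Finset.range (m+1), g j) + (∑ j ∈ Finset.range (m+2), h j)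
        + ∑ i ∈ Finset.range (m+1), e i := by
  rw [Finset.sum_range_succ' f (m+1), Finset.sum_range_succ' h (m+1)]
  rw [Finset.sum_congr rfl (fun i hi => hstep i (Finset.mem_range.mp hi))]
  rw [Finset.sum_add_distrib, Finset.sum_add_distrib, hf0]
  rw [Finset.sum_range_succ (fun i => g (i+1)) m]
  have hg' : ∑ j ∈ Finset.range (m+1), g j = (∑ i ∈ Finset.range m, g (i+1)) + g 0 :=
    Finset.sum_range_succ' g m
  rw [hg', hgtop]
  abel
end

def eAux {R : Type*} [CommRing R] (A B : R) (n k : ℕ) : R :=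
  ∑ j ∈ Finset.range (k + 2),
    ((k + 1).choose j : R) * ((intChoose ((n : ℤ) - j) ((n : ℤ) - k - j) : ℤ) : R) *
      A ^ (((n : ℤ) - k - j).toNat) * B ^ j

lemma eAux_rec {R : Type*} [CommRing R] (A B : R) (n k : ℕ) :
    eAux A B (n+2) (k+1)
      = eAux A B (n+1) k + A * eAux A B (n+1) (k+1) + B * eAux A B n k := by
  unfold eAux
  rw [Finset.mul_sum, Finset.mul_sum]
  refine sum_shift_combine _ _ _ _ (k+1) ?hf0 ?hstep ?hgtop
  case hgtop =>
    rw [Nat.choose_eq_zero_of_lt (by omega : k + 1 < k + 2)]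
    push_cast
    ring
  case hf0 =>
    rw [show ((n+2:ℕ):ℤ) - ((0:ℕ):ℤ) = ((n:ℤ)+1) + 1 by push_cast; ring,
        show ((n+2:ℕ):ℤ) - ((k+1:ℕ):ℤ) - ((0:ℕ):ℤ) = (n:ℤ)+1-(k:ℤ) by push_cast; ring,
        show ((n+1:ℕ):ℤ) - ((0:ℕ):ℤ) = (n:ℤ)+1 by push_cast; ring,
        show ((n+1:ℕ):ℤ) - ((k:ℕ):ℤ) - ((0:ℕ):ℤ) = (n:ℤ)+1-(k:ℤ) by push_cast; ring,
        show ((n+1:ℕ):ℤ) - ((k+1:ℕ):ℤ) - ((0:ℕ):ℤ) = (n:ℤ)+1-(k:ℤ)-1 by push_cast; ring]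
    simp only [Nat.choose_zero_right, Nat.cast_one, one_mul, pow_zero, mul_one]
    rw [intChoose_pascal ((n:ℤ)+1) ((n:ℤ)+1-(k:ℤ)) (by rintro ⟨h1, h2⟩; omega)]
    rcases lt_or_ge ((n:ℤ)+1-(k:ℤ)-1) 0 with h | h
    · rw [intChoose_neg h]
      push_cast
      ring
    · have ht : ((n:ℤ)+1-(k:ℤ)).toNat = ((n:ℤ)+1-(k:ℤ)-1).toNat + 1 := by omega
      rw [ht, pow_succ]
      push_cast
      ring
  case hstep =>
    intro i hi
    rw [show ((n+2:ℕ):ℤ) - ((i+1:ℕ):ℤ) = ((n:ℤ)-(i:ℤ)) + 1 by push_cast; ring,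
        show ((n+2:ℕ):ℤ) - ((k+1:ℕ):ℤ) - ((i+1:ℕ):ℤ) = (n:ℤ)-(k:ℤ)-(i:ℤ) by push_cast; ring,
        show ((n+1:ℕ):ℤ) - ((i+1:ℕ):ℤ) = (n:ℤ)-(i:ℤ) by push_cast; ring,
        show ((n+1:ℕ):ℤ) - ((k:ℕ):ℤ) - ((i+1:ℕ):ℤ) = (n:ℤ)-(k:ℤ)-(i:ℤ) by push_cast; ring,
        show ((n+1:ℕ):ℤ) - ((k+1:ℕ):ℤ) - ((i+1:ℕ):ℤ) = (n:ℤ)-(k:ℤ)-(i:ℤ)-1 by push_cast; ring]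
    rw [Nat.choose_succ_succ (k+1) i]
    rw [intChoose_pascal ((n:ℤ)-(i:ℤ)) ((n:ℤ)-(k:ℤ)-(i:ℤ)) (by rintro ⟨h1, h2⟩; omega)]
    rcases lt_or_ge ((n:ℤ)-(k:ℤ)-(i:ℤ)-1) 0 with h | h
    · rw [intChoose_neg h]
      push_cast
      ring
    · have ht : ((n:ℤ)-(k:ℤ)-(i:ℤ)).toNat = ((n:ℤ)-(k:ℤ)-(i:ℤ)-1).toNat + 1 := by omega
      rw [ht, pow_succ]
      push_cast
      ring

lemma eAux_base {R : Type*} [CommRing R] (A B : R) (n : ℕ) :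
    eAux A B (n+1) 0 = A^(n+1) + A^n * B := by
  unfold eAux
  rw [Finset.sum_range_succ, Finset.sum_range_succ, Finset.sum_range_zero]
  push_cast
  norm_num
  rw [show intChoose ((n:ℤ)+1) ((n:ℤ)+1) = 1 from intChoose_self (by omega),
      show intChoose (n:ℤ) (n:ℤ) = 1 from intChoose_self (by omega)]
  norm_num

lemma eAux_zero {R : Type*} [CommRing R] (A B : R) (k : ℕ) :
    eAux A B 0 k = if k = 0 then 1 else 0 := by
  unfold eAux
  rcases k with _ | k
  · rw [Finset.sum_range_succ, Finset.sum_range_succ, Finset.sum_range_zero]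
    push_cast
    norm_num
    rw [show intChoose (0:ℤ) (0:ℤ) = 1 from intChoose_self (by omega),
        show intChoose (-1:ℤ) (-1:ℤ) = 0 from intChoose_neg (by omega)]
    norm_num
  · rw [if_neg (by omega)]
    apply Finset.sum_eq_zero
    intro j hj
    have h0 : ((0:ℕ):ℤ) - ((k+1:ℕ):ℤ) - (j:ℤ) < 0 := by push_cast; omega
    rw [intChoose_neg h0]
    simp

lemma eAux_one {R : Type*} [CommRing R] (A B : R) (k : ℕ) :
    eAux A B 1 k = if k = 0 then A + B else if k = 1 then 1 else 0 := by
  unfold eAux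
  rcases k with _ | k
  · rw [Finset.sum_range_succ, Finset.sum_range_succ, Finset.sum_range_zero]
    push_cast
    norm_num
    rw [show intChoose (0:ℤ) (0:ℤ) = 1 from intChoose_self (by omega),
        show intChoose (1:ℤ) (1:ℤ) = 1 from intChoose_self (by omega)]
    norm_num
  rcases k with _ | k
  · rw [Finset.sum_range_succ, Finset.sum_range_succ, Finset.sum_range_succ,
      Finset.sum_range_zero]
    push_cast
    norm_num
    rw [show intChoose (1:ℤ) (0:ℤ) = 1 from intChoose_zero' (by omega),
        show intChoose (0:ℤ) (-1:ℤ) = 0 from intChoose_neg (by omega),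
        show intChoose (-1:ℤ) (-2:ℤ) = 0 from intChoose_neg (by omega)]
    norm_num
  · rw [if_neg (by omega), if_neg (by omega)]
    apply Finset.sum_eq_zero
    intro j hj
    have h0 : ((1:ℕ):ℤ) - ((k+2:ℕ):ℤ) - (j:ℤ) < 0 := by push_cast; omega
    rw [intChoose_neg h0]
    simp

lemma coeff_eq {R : Type*} [CommRing R] (α β : R) (P : ℕ → Polynomial R)
    (hP0 : P 0 = 1)
    (hP1 : P 1 = Polynomial.X - Polynomial.C (α + β))
    (hPrec : ∀ n, P (n + 2) =
      (Polynomial.X - Polynomial.C α) * P (n + 1) - Polynomial.C β * Polynomial.X * P n) :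
    ∀ n k : ℕ, (P n).coeff k = eAux (-α) (-β) n k := by
  intro n
  induction n using Nat.twoStepInduction with
  | zero =>
    intro k
    rw [hP0, eAux_zero, Polynomial.coeff_one]
    try simp [eq_comm]
  | one =>
    intro k
    rw [hP1, eAux_one, Polynomial.coeff_sub, Polynomial.coeff_X, Polynomial.coeff_C]
    rcases k with _ | _ | k <;> norm_num <;> ring
  | more n ih ih1 =>
    intro k
    rw [hPrec n, Polynomial.coeff_sub, sub_mul, Polynomial.coeff_sub,
      mul_assoc (Polynomial.C β) Polynomial.X (P n), Polynomial.coeff_C_mul,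
      Polynomial.coeff_C_mul, mul_comm Polynomial.X (P (n+1)), mul_comm Polynomial.X (P n)]
    rcases k with _ | k
    · rw [Polynomial.coeff_mul_X_zero, Polynomial.coeff_mul_X_zero, ih1 0,
        show n + 2 = (n+1)+1 from rfl, eAux_base, eAux_base]
      ring
    · rw [Polynomial.coeff_mul_X, Polynomial.coeff_mul_X, ih1 k, ih1 (k+1), ih k,
        eAux_rec]
      ring

/-- Explicit formula for the coefficients of the Laurent biorthogonal polynomials:
`[x^k] P_n = (-1)^{n-k} ∑_{j=0}^{k+1} C(k+1,j) C(n-j, n-k-j) α^{n-k-j} β^j`. -/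
theorem laurent_biorthogonal_coeff_formula {R : Type*} [CommRing R] (α β : R)
    (P : ℕ → Polynomial R)
    (hP0 : P 0 = 1)
    (hP1 : P 1 = Polynomial.X - Polynomial.C (α + β))
    (hPrec : ∀ n, P (n + 2) =
      (Polynomial.X - Polynomial.C α) * P (n + 1) - Polynomial.C β * Polynomial.X * P n) :
    ∀ n k : ℕ, k ≤ n →
      (P n).coeff k =
        (-1 : R) ^ (n - k) *
          ∑ j ∈ Finset.range (k + 2),
            ((k + 1).choose j : R) *
              ((intChoose ((n : ℤ) - j) ((n : ℤ) - k - j) : ℤ) : R) *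
              α ^ ((n : ℤ) - k - j).toNat * β ^ j := by

  intro n k hkn
  rw [coeff_eq α β P hP0 hP1 hPrec n k]
  unfold eAux
  rw [Finset.mul_sum]
  apply Finset.sum_congr rfl
  intro j hj
  rcases lt_or_ge ((n:ℤ) - k - j) 0 with h | h
  · rw [intChoose_neg h]
    push_cast
    ring
  · have hm : ((n:ℤ) - k - j).toNat + j = n - k := by omega
    rw [← hm, neg_pow, neg_pow, pow_add]
    ring
end

section
/- For a commutative ring R and α, β ∈ R, the Riordan array identity ((1-βx)/(1+αx), x(1-βx)/(1+αx)) = (1, x/(1-βx)) · (1/(1+(α+β)x), x/((1+βx)(1+(α+β)x))) holds; equivalently, writing f(x)=x/(1-βx) and g(x)=x/((1+βx)(1+(α+β)x)), one has (1/(1+(α+β)f(x))) = (1-βx)/(1+αx) and g(f(x)) = x(1-βx)/(1+αx) as formal power series. -/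
/-!
Put `u = 1 - βx`. Since `f = x/u`, we have `f u = x`, hence `(1 + c f) u = 1 + (c - β) x` for every
`c ∈ R`. Taking `c = α + β` gives `(1 + (α+β) f) u = 1 + αx`, and taking `c = β` gives
`(1 + β f) u = 1`; both identities of the theorem follow by inverting these products.
-/

open PowerSeries

namespace PowerSeries

variable {R : Type*} [CommRing R]

theorem invOfUnit_eq_of_mul_eq_one {φ ψ : R⟦X⟧} {u : Rˣ} (hφ : constantCoeff φ = u)
    (h : φ * ψ = 1) : invOfUnit φ u = ψ :=
  left_inv_eq_right_inv (invOfUnit_mul φ u hφ) h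

theorem invOfUnit_one_eq_mul_invOfUnit_of_mul_eq {φ ψ χ : R⟦X⟧} (hφ : constantCoeff φ = 1)
    (hχ : constantCoeff χ = 1) (h : φ * ψ = χ) : invOfUnit φ 1 = ψ * invOfUnit χ 1 :=
  invOfUnit_eq_of_mul_eq_one (by simpa using hφ) <| by
    rw [← mul_assoc, h, mul_invOfUnit χ 1 (by simpa using hχ)]

theorem one_add_C_mul_mul_one_sub_C_mul_X {f : R⟦X⟧} {β : R} (hf : f * (1 - C β * X) = X)
    (c : R) : (1 + C c * f) * (1 - C β * X) = 1 + C (c - β) * X := by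
  rw [map_sub]
  linear_combination C c * hf

end PowerSeries

/-- Riordan array factorization
`((1-βx)/(1+αx), x(1-βx)/(1+αx)) = (1, x/(1-βx)) · (1/(1+(α+β)x), x/((1+βx)(1+(α+β)x)))`:
with `f(x) = x/(1-βx)`, one has `1/(1+(α+β)f(x)) = (1-βx)/(1+αx)` and
`f(x)/((1+βf(x))(1+(α+β)f(x))) = x(1-βx)/(1+αx)`. -/
theorem riordan_factorization {R : Type*} [CommRing R] (α β : R)
    (f : PowerSeries R)
    (hf : f = PowerSeries.X * PowerSeries.invOfUnit (1 - (PowerSeries.C (R := R)) β * PowerSeries.X) 1) :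
    PowerSeries.invOfUnit (1 + (PowerSeries.C (R := R)) (α + β) * f) 1 =
        (1 - (PowerSeries.C (R := R)) β * PowerSeries.X) *
          PowerSeries.invOfUnit (1 + (PowerSeries.C (R := R)) α * PowerSeries.X) 1 ∧
    f * PowerSeries.invOfUnit
          ((1 + (PowerSeries.C (R := R)) β * f) * (1 + (PowerSeries.C (R := R)) (α + β) * f)) 1 =
        PowerSeries.X * (1 - (PowerSeries.C (R := R)) β * PowerSeries.X) *
          PowerSeries.invOfUnit (1 + (PowerSeries.C (R := R)) α * PowerSeries.X) 1 := by
  set u : R⟦X⟧ := 1 - C β * X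
  set v : R⟦X⟧ := 1 + C α * X
  have hfu : f * u = X := by
    rw [hf, mul_assoc, invOfUnit_mul u 1 (by simp [u]), mul_one]
  have hf₀ : constantCoeff f = 0 := by simp [hf]
  have hsum : (1 + C (α + β) * f) * u = v := by
    rw [one_add_C_mul_mul_one_sub_C_mul_X hfu, add_sub_cancel_right]
  have hβ : (1 + C β * f) * u = 1 := by
    rw [one_add_C_mul_mul_one_sub_C_mul_X hfu, sub_self, map_zero, zero_mul, add_zero]
  have hprod : (1 + C β * f) * (1 + C (α + β) * f) * (u * u) = v := by
    linear_combination ((1 + C (α + β) * f) * u) * hβ + hsum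
  refine ⟨invOfUnit_one_eq_mul_invOfUnit_of_mul_eq (by simp [hf₀]) (by simp [v]) hsum, ?_⟩
  rw [invOfUnit_one_eq_mul_invOfUnit_of_mul_eq (by simp [hf₀]) (by simp [v]) hprod]
  linear_combination (u * invOfUnit v 1) * hfu
end

section
/- Define P_n by P_0=1, P_1=x-(α+β), P_n=(x-α)P_{n-1}-βx P_{n-2}, and define Q_n by Q_0=1, Q_1=x-(α+β), Q_n=(x-(α+2β))Q_{n-1}-β(α+β)Q_{n-2}. Then for all n ≥ 0: P_n(x) = ∑_{k=0}^n C(n-1, n-k) β^{n-k} Q_k(x), where C(n-1,n-k) is the binomial coefficient with the convention C(-1,0)=1 and C(n-1,m)=0 for m>n-1 when n≥1. -/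
open Polynomial Finset

/-- The coefficient `C(n-1, n-k) β^(n-k)`. -/
def cc {R : Type*} [CommRing R] (β : R) (n k : ℕ) : R :=
  ((n - 1).choose (n - k) : R) * β ^ (n - k)

lemma cc_zero {R : Type*} [CommRing R] (β : R) (n : ℕ) : cc β (n + 1) 0 = 0 := by
  simp [cc, Nat.choose_eq_zero_of_lt (by omega : n + 1 - 1 < n + 1 - 0)]

lemma cc_diag {R : Type*} [CommRing R] (β : R) (n : ℕ) : cc β n n = 1 := by
  simp [cc]

lemma cc_pascal {R : Type*} [CommRing R] (β : R) {n k : ℕ} (hk : k < n) :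
    cc β (n + 1) (k + 1) = cc β n k + β * cc β n (k + 1) := by
  obtain ⟨m, rfl⟩ : ∃ m, n = k + m + 1 := ⟨n - k - 1, by omega⟩
  simp only [cc,
    show k + m + 1 + 1 - 1 = k + m + 1 from by omega,
    show k + m + 1 + 1 - (k + 1) = m + 1 from by omega,
    show k + m + 1 - 1 = k + m from by omega,
    show k + m + 1 - k = m + 1 from by omega,
    show k + m + 1 - (k + 1) = m from by omega]
  rw [Nat.choose_succ_succ (k + m) m]
  push_cast
  ring

lemma core {R : Type*} [CommRing R] (β : R) (F : ℕ → Polynomial R) {n : ℕ} (hn : 1 ≤ n) :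
    ∑ k ∈ Finset.range (n + 2), Polynomial.C (cc β (n + 1) k) * F k
      = ∑ k ∈ Finset.range (n + 1), Polynomial.C (cc β n k) * F (k + 1)
        + Polynomial.C β * ∑ k ∈ Finset.range (n + 1), Polynomial.C (cc β n k) * F k := by
  obtain ⟨m, rfl⟩ : ∃ m, n = m + 1 := ⟨n - 1, by omega⟩
  rw [Finset.sum_range_succ' (fun k => Polynomial.C (cc β (m + 1 + 1) k) * F k) (m + 2)]
  rw [Finset.mul_sum,
    Finset.sum_range_succ' (fun k => Polynomial.C β * (Polynomial.C (cc β (m + 1) k) * F k)) (m + 1)]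
  rw [cc_zero, cc_zero]
  simp only [map_zero, zero_mul, mul_zero, add_zero]
  rw [Finset.sum_range_succ (fun k => Polynomial.C (cc β (m + 1 + 1) (k + 1)) * F (k + 1)) (m + 1),
    Finset.sum_range_succ (fun k => Polynomial.C (cc β (m + 1) k) * F (k + 1)) (m + 1)]
  have key : ∀ k ∈ Finset.range (m + 1),
      Polynomial.C (cc β (m + 1 + 1) (k + 1)) * F (k + 1)
        = Polynomial.C (cc β (m + 1) k) * F (k + 1)
          + Polynomial.C β * (Polynomial.C (cc β (m + 1) (k + 1)) * F (k + 1)) := by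
    intro k hk
    rw [cc_pascal β (Finset.mem_range.mp hk), map_add, map_mul]
    ring
  rw [Finset.sum_congr rfl key, Finset.sum_add_distrib, cc_diag, cc_diag, map_one]
  ring

/-- `P_n(x) = ∑_{k=0}^n C(n-1, n-k) β^{n-k} Q_k(x)`, relating the Laurent biorthogonal
polynomials `P_n` to the associated orthogonal polynomials `Q_n`.  (With natural-number
subtraction, `Nat.choose (n-1) (n-k)` realizes the conventions `C(-1,0)=1` and
`C(n-1,m)=0` for `m > n-1`.) -/
theorem laurent_to_orthogonal {R : Type*} [CommRing R] (α β : R)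
    (P Q : ℕ → Polynomial R)
    (hP0 : P 0 = 1)
    (hP1 : P 1 = Polynomial.X - Polynomial.C (α + β))
    (hPrec : ∀ n, P (n + 2) =
      (Polynomial.X - Polynomial.C α) * P (n + 1) - Polynomial.C β * Polynomial.X * P n)
    (hQ0 : Q 0 = 1)
    (hQ1 : Q 1 = Polynomial.X - Polynomial.C (α + β))
    (hQrec : ∀ n, Q (n + 2) =
      (Polynomial.X - Polynomial.C (α + 2 * β)) * Q (n + 1)
        - Polynomial.C (β * (α + β)) * Q n) :
    ∀ n, P n = ∑ k ∈ Finset.range (n + 1),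
      Polynomial.C (((n - 1).choose (n - k) : R) * β ^ (n - k)) * Q k := by
  have main : ∀ n, 1 ≤ n →
      (P n = ∑ k ∈ Finset.range (n + 1), Polynomial.C (cc β n k) * Q k ∧
       P (n + 1) = Polynomial.C β * P n
         + ∑ k ∈ Finset.range (n + 1), Polynomial.C (cc β n k) * Q (k + 1)) := by
    intro n hn
    induction n, hn using Nat.le_induction with
    | base =>
      constructor
      · rw [Finset.sum_range_succ, Finset.sum_range_succ, Finset.sum_range_zero]
        simp [cc, hP1, hQ1]
      · rw [Finset.sum_range_succ, Finset.sum_range_succ, Finset.sum_range_zero,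
          hPrec 0, hQrec 0, hP1, hP0, hQ1, hQ0]
        simp only [cc, zero_add]
        norm_num
        simp only [map_add, map_mul, map_ofNat]
        ring
    | succ n hn ih =>
      obtain ⟨hA, hB⟩ := ih
      have hUn : ∑ k ∈ Finset.range (n + 1), Polynomial.C (cc β n k) * Q (k + 1)
          = P (n + 1) - Polynomial.C β * P n := by rw [hB]; ring
      have hS := core β Q hn
      have hU := core β (fun k => Q (k + 1)) hn
      have hV : ∑ k ∈ Finset.range (n + 1), Polynomial.C (cc β n k) * Q (k + 1 + 1)
          = (Polynomial.X - Polynomial.C (α + 2 * β))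
              * (∑ k ∈ Finset.range (n + 1), Polynomial.C (cc β n k) * Q (k + 1))
            - Polynomial.C (β * (α + β))
              * ∑ k ∈ Finset.range (n + 1), Polynomial.C (cc β n k) * Q k := by
        rw [Finset.mul_sum, Finset.mul_sum, ← Finset.sum_sub_distrib]
        refine Finset.sum_congr rfl fun k _ => ?_
        show Polynomial.C (cc β n k) * Q (k + 2) = _
        rw [hQrec k]; ring
      constructor
      · rw [hS, ← hA, hUn]
        ring
      · rw [hPrec n, hU, hV, hUn, ← hA]
        simp only [map_add, map_mul, map_ofNat]
        ring
  intro n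
  match n with
  | 0 =>
    rw [Finset.sum_range_succ, Finset.sum_range_zero]
    simp [hP0, hQ0]
  | m + 1 =>
    have h := (main (m + 1) (by omega)).1
    simpa [cc] using h
end

section
/- Define Q_n by Q_0=1, Q_1=x-(α+β), Q_n=(x-(α+2β))Q_{n-1}-β(α+β)Q_{n-2}, and P_n by P_0=1, P_1=x-(α+β), P_n=(x-α)P_{n-1}-βx P_{n-2}. Then Q_n(x) = ∑_{k=0}^n C(n-1, n-k) (-β)^{n-k} P_k(x) for all n. -/
open Polynomial Finset

lemma key_sum {R : Type*} [CommRing R] (b : R) (G : ℕ → R[X]) (m : ℕ) :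
    ∑ k ∈ range (m + 3), C (((m + 1).choose (m + 2 - k) : R) * b ^ (m + 2 - k)) * G k
      = (∑ k ∈ range (m + 2), C ((m.choose (m + 1 - k) : R) * b ^ (m + 1 - k)) * G (k + 1))
        + C b * ∑ k ∈ range (m + 2), C ((m.choose (m + 1 - k) : R) * b ^ (m + 1 - k)) * G k := by
  conv_lhs => rw [Finset.sum_range_succ' _ (m + 2), Finset.sum_range_succ _ (m + 1)]
  conv_rhs => rw [Finset.mul_sum]
  conv_rhs => rw [Finset.sum_range_succ _ (m + 1)]
  conv_rhs => rw [Finset.sum_range_succ' (fun i => C b * (C ((m.choose (m + 1 - i) : R) * b ^ (m + 1 - i)) * G i)) (m + 1)]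
  have h0 : ((m + 1).choose (m + 2 - 0) : R) = 0 := by
    norm_num [Nat.choose_eq_zero_of_lt]
  have h1 : (m.choose (m + 1 - 0) : R) = 0 := by
    norm_num [Nat.choose_eq_zero_of_lt]
  rw [h0, h1]
  have e1 : m + 2 - (m + 1 + 1) = 0 := by omega
  have e2 : m + 1 - (m + 1) = 0 := by omega
  rw [e1, e2]
  simp only [Nat.choose_zero_right, pow_zero, Nat.cast_one, one_mul, map_one, one_mul,
    zero_mul, map_zero, mul_zero, add_zero]
  have hsum : ∑ x ∈ range (m + 1),
      C (((m + 1).choose (m + 2 - (x + 1)) : R) * b ^ (m + 2 - (x + 1))) * G (x + 1)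
      = ∑ x ∈ range (m + 1), (C ((m.choose (m + 1 - x) : R) * b ^ (m + 1 - x)) * G (x + 1)
        + C b * (C ((m.choose (m + 1 - (x + 1)) : R) * b ^ (m + 1 - (x + 1))) * G (x + 1))) := by
    apply Finset.sum_congr rfl
    intro k hk
    simp only [Finset.mem_range] at hk
    have e3 : m + 2 - (k + 1) = (m - k) + 1 := by omega
    have e4 : m + 1 - k = (m - k) + 1 := by omega
    have e5 : m + 1 - (k + 1) = m - k := by omega
    rw [e3, e4, e5, Nat.choose_succ_succ']
    push_cast
    simp only [pow_succ, add_mul, map_add, map_mul, map_pow]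
    ring
  rw [hsum, Finset.sum_add_distrib]
  ring

/-- `Q_n(x) = ∑_{k=0}^n C(n-1, n-k) (-β)^{n-k} P_k(x)`, expressing the associated
orthogonal polynomials in terms of the Laurent biorthogonal polynomials. -/
theorem orthogonal_to_laurent {R : Type*} [CommRing R] (α β : R)
    (P Q : ℕ → Polynomial R)
    (hP0 : P 0 = 1)
    (hP1 : P 1 = Polynomial.X - Polynomial.C (α + β))
    (hPrec : ∀ n, P (n + 2) =
      (Polynomial.X - Polynomial.C α) * P (n + 1) - Polynomial.C β * Polynomial.X * P n)
    (hQ0 : Q 0 = 1)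
    (hQ1 : Q 1 = Polynomial.X - Polynomial.C (α + β))
    (hQrec : ∀ n, Q (n + 2) =
      (Polynomial.X - Polynomial.C (α + 2 * β)) * Q (n + 1)
        - Polynomial.C (β * (α + β)) * Q n) :
    ∀ n, Q n = ∑ k ∈ Finset.range (n + 1),
      Polynomial.C (((n - 1).choose (n - k) : R) * (-β) ^ (n - k)) * P k := by
  have main : ∀ n, Q (n + 1) = (∑ k ∈ range (n + 2),
        C ((n.choose (n + 1 - k) : R) * (-β) ^ (n + 1 - k)) * P k)
      ∧ Q (n + 2) + C β * Q (n + 1) = ∑ k ∈ range (n + 2),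
        C ((n.choose (n + 1 - k) : R) * (-β) ^ (n + 1 - k)) * P (k + 1) := by
    intro n
    induction n with
    | zero =>
      constructor
      · simp [Finset.sum_range_succ, hP0, hP1, hQ1, Nat.choose]
      · simp only [Finset.sum_range_succ, Finset.sum_range_zero, zero_add]
        norm_num [Nat.choose, hQrec 0, hQ0, hQ1, hPrec 0, hP0, hP1]
        simp only [map_add, map_mul, map_ofNat, map_one]
        ring
    | succ n ih =>
      obtain ⟨hA, hB⟩ := ih
      have key1 := key_sum (-β) P n
      have key2 := key_sum (-β) (fun k => P (k + 1)) n
      have hA' : Q (n + 2) = ∑ k ∈ range (n + 3),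
          C (((n + 1).choose (n + 2 - k) : R) * (-β) ^ (n + 2 - k)) * P k := by
        rw [key1, ← hA, ← hB, map_neg]
        ring
      refine ⟨hA', ?_⟩
      rw [key2, ← hB]
      have hV : ∑ k ∈ range (n + 2),
          C ((n.choose (n + 1 - k) : R) * (-β) ^ (n + 1 - k)) * P (k + 1 + 1)
          = (X - C α) * (∑ k ∈ range (n + 2),
              C ((n.choose (n + 1 - k) : R) * (-β) ^ (n + 1 - k)) * P (k + 1))
            - C β * X * (∑ k ∈ range (n + 2),
              C ((n.choose (n + 1 - k) : R) * (-β) ^ (n + 1 - k)) * P k) := by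
        rw [Finset.mul_sum, Finset.mul_sum, ← Finset.sum_sub_distrib]
        apply Finset.sum_congr rfl
        intro k _
        rw [hPrec k]
        ring
      rw [hV, ← hA, ← hB, hQrec (n + 1), map_neg]
      simp only [map_add, map_mul, map_ofNat]
      ring
  intro n
  match n with
  | 0 => simp [hQ0, hP0]
  | (m + 1) =>
    have := (main m).1
    simpa using this
end

section
/- Let S_n = ∑_{k=0}^n C(n+k,2k)·Cat(k), where Cat(k) is the k-th Catalan number (these are the large Schröder numbers). Then the generating function g(x)=∑ S_n x^n satisfies the algebraic equation βx·g(x)^2 - (1-αx)g(x) + 1 = 0 with α=β=1, i.e., x g(x)^2 - (1-x) g(x) + 1 = 0. -/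
/-!
Since `∑ₙ C(n+k, 2k) xⁿ = xᵏ / (1-x)^(2k+1)`, the series `g` is `C(y) / (1-x)`, where `C` is the
Catalan series and `y = x / (1-x)²`. Hence `x g² - (1-x) g + 1 = y C(y)² - C(y) + 1`, which
vanishes by the Catalan equation `C = 1 + y C²`.
-/

open Finset

namespace PowerSeries

variable {R : Type*} [CommRing R]

theorem coeff_pow_eq_zero_of_lt {a : R⟦X⟧} (ha : constantCoeff a = 0) {d j : ℕ} (h : j < d) :
    coeff j (a ^ d) = 0 :=
  X_pow_dvd_iff.mp (pow_dvd_pow_of_dvd (X_dvd_iff.mpr ha) d) j h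

theorem coeff_subst_eq_sum_range {a : R⟦X⟧} (ha : constantCoeff a = 0) (f : R⟦X⟧)
    {j n : ℕ} (hj : j ≤ n) :
    coeff j (f.subst a) = ∑ d ∈ range (n + 1), coeff d f * coeff j (a ^ d) := by
  rw [coeff_subst' (.of_constantCoeff_zero' ha)]
  refine finsum_eq_sum_of_support_subset _ fun d hd => ?_
  rw [coe_range, Set.mem_Iio]
  by_contra! hnd
  exact hd (by simp only [coeff_pow_eq_zero_of_lt ha (show j < d by omega), smul_zero])

theorem coeff_mul_subst {a : R⟦X⟧} (ha : constantCoeff a = 0) (p f : R⟦X⟧) (n : ℕ) :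
    coeff n (p * f.subst a) = ∑ d ∈ range (n + 1), coeff d f * coeff n (p * a ^ d) := by
  simp_rw [coeff_mul, mul_sum]
  rw [sum_comm]
  refine sum_congr rfl fun q hq => ?_
  have hq₂ : q.2 ≤ n := by rw [HasAntidiagonal.mem_antidiagonal] at hq; omega
  rw [coeff_subst_eq_sum_range ha f hq₂, mul_sum]
  exact sum_congr rfl fun d _ => by ring

theorem catalanSeries_subst_sq_mul_add_one {a : R⟦X⟧} (ha : HasSubst a) :
    ((catalanSeries.map (Nat.castRingHom R)).subst a) ^ 2 * a + 1 =
      (catalanSeries.map (Nat.castRingHom R)).subst a := by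
  conv_rhs => rw [← catalanSeries_sq_mul_X_add_one]
  simp only [← coe_substAlgHom ha, map_add, map_mul, map_pow, map_one, map_X]
  rw [coe_substAlgHom, subst_X ha]

theorem coeff_mk_one_mul_X_mul_mk_one_sq_pow (k n : ℕ) :
    coeff n (mk 1 * (X * mk 1 ^ 2) ^ k : R⟦X⟧) = (n + k).choose (2 * k) := by
  rw [show (mk 1 * (X * mk 1 ^ 2) ^ k : R⟦X⟧) = X ^ k * mk 1 ^ (2 * k + 1) by ring,
    mk_one_pow_eq_mk_choose_add, coeff_X_pow_mul', coeff_mk]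
  split_ifs with hk
  · congr 2
    omega
  · rw [Nat.choose_eq_zero_of_lt (by omega), Nat.cast_zero]

end PowerSeries

open PowerSeries in
/-- The generating function `g` of the large Schröder numbers
`S_n = ∑_{k=0}^n C(n+k,2k)·Cat(k)` satisfies `x g² - (1-x) g + 1 = 0`. -/
theorem schroder_gf_quadratic :
    let g : PowerSeries ℤ := PowerSeries.mk fun n =>
      ((∑ k ∈ Finset.range (n + 1), (n + k).choose (2 * k) * catalan k : ℕ) : ℤ)
    PowerSeries.X * g ^ 2 - (1 - PowerSeries.X) * g + 1 = 0 := by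
  intro g
  set y : ℤ⟦X⟧ := X * PowerSeries.mk 1 ^ 2
  have hy : constantCoeff y = 0 := by simp [y]
  set H := (catalanSeries.map (Nat.castRingHom ℤ)).subst y
  have hg : g = PowerSeries.mk 1 * H := by
    ext n
    rw [coeff_mul_subst hy, coeff_mk]
    push_cast
    refine sum_congr rfl fun k _ => ?_
    rw [coeff_mk_one_mul_X_mul_mk_one_sq_pow, coeff_map, catalanSeries_coeff,
      Nat.coe_castRingHom, mul_comm]
  have hH := catalanSeries_subst_sq_mul_add_one (HasSubst.of_constantCoeff_zero' hy)
  have hgeom := mk_one_mul_one_sub_eq_one ℤ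
  rw [hg]
  linear_combination hH - H * hgeom
end

section
/- Define μ_n(α,β) = ∑_{k=0}^n C(n+k,2k)·Cat(k)·α^{n-k} β^k where Cat(k) is the k-th Catalan number. Then μ_n(α,β) = (1/(n+1)) ∑_{j=0}^{n+1} C(n+1,j) C(2n-j, n-j) α^j β^{n-j}. -/
/-!
Both sides are sums of monomials `α^(n-k) β^k`, after reindexing the right-hand side by
`j = n - k` (its term `j = n + 1` vanishes). Coefficientwise, the identity is
`(n+1) C(n+k,2k) Cat(k) = C(n+1,k+1) C(n+k,k)`: multiplying by `k+1` turns `Cat(k)` into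
`C(2k,k)`, the trinomial revision `C(n+k,2k) C(2k,k) = C(n+k,k) C(n,k)` applies, and
`(n+1) C(n,k) = (k+1) C(n+1,k+1)`.
-/

theorem intChoose_natCast (a b : ℕ) : intChoose a b = a.choose b := by
  unfold intChoose
  split_ifs with h
  · simp only [Int.toNat_natCast]
  · rw [Nat.choose_eq_zero_of_lt (by omega), Nat.cast_zero]

theorem intChoose_of_neg (a : ℤ) {b : ℤ} (hb : b < 0) : intChoose a b = 0 :=
  if_neg fun h => (not_le.mpr hb) h.1

theorem succ_mul_choose_two_mul_mul_catalan (n k : ℕ) :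
    (n + 1) * ((n + k).choose (2 * k) * catalan k) = (n + 1).choose (k + 1) * (n + k).choose k := by
  have trinomial : (n + k).choose (2 * k) * (2 * k).choose k = (n + k).choose k * n.choose k := by
    rw [Nat.choose_mul (by omega)]
    congr 2 <;> omega
  apply Nat.eq_of_mul_eq_mul_left k.succ_pos
  calc (k + 1) * ((n + 1) * ((n + k).choose (2 * k) * catalan k))
      = (n + 1) * ((n + k).choose (2 * k) * (2 * k).choose k) := by
        rw [← Nat.centralBinom, ← succ_mul_catalan_eq_centralBinom]; ring
    _ = (n + 1) * n.choose k * (n + k).choose k := by rw [trinomial]; ring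
    _ = (k + 1) * ((n + 1).choose (k + 1) * (n + k).choose k) := by
        rw [Nat.add_one_mul_choose_eq]; ring

/-- The two formulas for the moments agree (stated after clearing the denominator `n+1`):
`(n+1)·∑_{k=0}^n C(n+k,2k)·Cat(k)·α^{n-k}β^k = ∑_{j=0}^{n+1} C(n+1,j)C(2n-j,n-j)α^j β^{n-j}`. -/
theorem moments_two_formulas {R : Type*} [CommRing R] (α β : R) (n : ℕ) :
    ((n : R) + 1) *
        ∑ k ∈ Finset.range (n + 1),
          (((n + k).choose (2 * k) * catalan k : ℕ) : R) * α ^ (n - k) * β ^ k =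
      ∑ j ∈ Finset.range (n + 2),
        ((n + 1).choose j : R) *
          ((intChoose (2 * (n : ℤ) - j) ((n : ℤ) - j) : ℤ) : R) *
          α ^ j * β ^ (((n : ℤ) - j).toNat) := by
  rw [Finset.sum_range_succ _ (n + 1), intChoose_of_neg _ (by omega), Int.cast_zero, mul_zero,
    zero_mul, zero_mul, add_zero, Finset.mul_sum]
  conv_rhs => rw [← Finset.sum_range_reflect]
  refine Finset.sum_congr rfl fun k hk => ?_
  have hkn : k ≤ n := Nat.lt_succ_iff.mp (Finset.mem_range.mp hk)
  have exponent : (n : ℤ) - ((n + 1 - 1 - k : ℕ) : ℤ) = k := by omega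
  have top : 2 * (n : ℤ) - ((n + 1 - 1 - k : ℕ) : ℤ) = ((n + k : ℕ) : ℤ) := by push_cast; omega
  have coeff : (n + 1).choose (n + 1 - 1 - k) = (n + 1).choose (k + 1) := by
    rw [← Nat.choose_symm (by omega)]; congr 1; omega
  have key := congrArg (Nat.cast : ℕ → R) (succ_mul_choose_two_mul_mul_catalan n k)
  push_cast at key
  rw [exponent, top, intChoose_natCast, Int.toNat_natCast, coeff, Nat.add_sub_cancel,
    Int.cast_natCast, ← key]
  push_cast
  ring
end

section
/- Let P_n be defined by P_0=1, P_1=x-(α+β), P_n=(x-α)P_{n-1}-βxP_{n-2}, and let R_n(x) = d/dx P_{n+1}(x). Then [x^k] R_n(x) = (k+1)·[x^n]( ((1-βx)/(1+αx))^2 · (x(1-βx)/(1+αx))^k ). -/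
/-- The coefficient array of the derivatives `R_n = P_{n+1}'` of the Laurent
biorthogonal polynomials:
`[x^k] R_n = (k+1)·[x^n]( ((1-βx)/(1+αx))² · (x(1-βx)/(1+αx))^k )`. -/
theorem derivative_coeff_array {R : Type*} [CommRing R] (α β : R)
    (P : ℕ → Polynomial R)
    (hP0 : P 0 = 1)
    (hP1 : P 1 = Polynomial.X - Polynomial.C (α + β))
    (hPrec : ∀ n, P (n + 2) =
      (Polynomial.X - Polynomial.C α) * P (n + 1) - Polynomial.C β * Polynomial.X * P n) :
    ∀ n k : ℕ,
      (Polynomial.derivative (P (n + 1))).coeff k =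
        ((k : R) + 1) *
          PowerSeries.coeff (R := R) n
            ((((1 - PowerSeries.C (R := R) β * PowerSeries.X) *
                PowerSeries.invOfUnit (1 + PowerSeries.C (R := R) α * PowerSeries.X) 1) ^ 2) *
              (PowerSeries.X * (1 - PowerSeries.C (R := R) β * PowerSeries.X) *
                PowerSeries.invOfUnit (1 + PowerSeries.C (R := R) α * PowerSeries.X) 1) ^ k) := by
  set u : PowerSeries R := PowerSeries.invOfUnit (1 + PowerSeries.C (R := R) α * PowerSeries.X) 1 with hu
  have hunit : (1 + PowerSeries.C (R := R) α * PowerSeries.X) * u = 1 := by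
    apply PowerSeries.mul_invOfUnit
    simp
  set g : PowerSeries R := (1 - PowerSeries.C (R := R) β * PowerSeries.X) * u with hg
  have hII : (1 + PowerSeries.C (R := R) α * PowerSeries.X) * g =
      1 - PowerSeries.C (R := R) β * PowerSeries.X := by
    rw [hg, ← mul_assoc, mul_comm (1 + PowerSeries.C (R := R) α * PowerSeries.X)
      (1 - PowerSeries.C (R := R) β * PowerSeries.X), mul_assoc, hunit, mul_one]
  have hg0 : PowerSeries.coeff (R := R) 0 g = 1 := by
    rw [hg, PowerSeries.coeff_zero_eq_constantCoeff]
    simp [hu, PowerSeries.constantCoeff_invOfUnit]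
  -- coeff 1 of g
  have hg1 : PowerSeries.coeff (R := R) 1 g = -β - α := by
    have h2 : PowerSeries.coeff (R := R) 1 ((1 + PowerSeries.C (R := R) α * PowerSeries.X) * g) =
        PowerSeries.coeff (R := R) 1 (1 - PowerSeries.C (R := R) β * PowerSeries.X) := by rw [hII]
    have h3 : (1 + PowerSeries.C (R := R) α * PowerSeries.X) * g
        = g + PowerSeries.C (R := R) α * (PowerSeries.X * g) := by ring
    rw [h3] at h2
    simp only [map_add, map_sub, PowerSeries.coeff_C_mul, PowerSeries.coeff_succ_X_mul,
      PowerSeries.coeff_zero_eq_constantCoeff] at h2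
    rw [PowerSeries.coeff_zero_eq_constantCoeff] at hg0
    rw [hg0] at h2
    norm_num [PowerSeries.coeff_one, PowerSeries.coeff_X] at h2
    linear_combination h2
  -- identity (I)
  have hI : ∀ k : ℕ,
      (1 + PowerSeries.C (R := R) α * PowerSeries.X) * (g * (PowerSeries.X * g) ^ (k + 1)) =
        PowerSeries.X * ((1 - PowerSeries.C (R := R) β * PowerSeries.X) *
          (g * (PowerSeries.X * g) ^ k)) := by
    intro k
    have h1 : (1 + PowerSeries.C (R := R) α * PowerSeries.X) * (g * (PowerSeries.X * g) ^ (k + 1)) =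
        ((1 + PowerSeries.C (R := R) α * PowerSeries.X) * g) * (PowerSeries.X * g) ^ (k + 1) := by ring
    rw [h1, hII, pow_succ]
    ring
  -- the key coefficient identity
  have key : ∀ n k : ℕ, (P n).coeff k = PowerSeries.coeff (R := R) n (g * (PowerSeries.X * g) ^ k) := by
    intro n
    induction n using Nat.twoStepInduction with
    | zero =>
      intro k
      rw [hP0]
      rcases k with _ | k
      · simp [hg0]
      · have h4 : g * (PowerSeries.X * g) ^ (k + 1) =
            PowerSeries.X * (g * (PowerSeries.X * g) ^ k * g) := by rw [pow_succ]; ring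
        rw [h4]
        simp [Polynomial.coeff_one]
    | one =>
      intro k
      rw [hP1]
      rcases k with _ | k
      · simp only [pow_zero, mul_one, Polynomial.coeff_sub, Polynomial.coeff_X_zero,
          Polynomial.coeff_C_zero, hg1]
        ring
      · rcases k with _ | k
        · have h4 : g * (PowerSeries.X * g) ^ 1 = PowerSeries.X * (g * g) := by ring
          rw [h4, PowerSeries.coeff_succ_X_mul]
          have : PowerSeries.coeff (R := R) 0 (g * g) = 1 := by
            rw [PowerSeries.coeff_zero_eq_constantCoeff] at hg0 ⊢
            simp [hg0]
          rw [this]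
          simp [Polynomial.coeff_C]
        · have h5 : g * (PowerSeries.X * g) ^ (k + 2) =
              PowerSeries.X * (PowerSeries.X * (g * g * g * (PowerSeries.X * g) ^ k)) := by
            rw [pow_succ, pow_succ]; ring
          rw [h5, PowerSeries.coeff_succ_X_mul]
          have : PowerSeries.coeff (R := R) 0 (PowerSeries.X *
              (g * g * g * (PowerSeries.X * g) ^ k)) = 0 := by
            rw [PowerSeries.coeff_zero_eq_constantCoeff]
            simp
          rw [this]
          simp [Polynomial.coeff_X, Polynomial.coeff_C]
    | more n ih2 ih1 =>
      intro k
      rw [hPrec]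
      have hexp : (Polynomial.X - Polynomial.C α) * P (n + 1)
          - Polynomial.C β * Polynomial.X * P n
          = Polynomial.X * P (n + 1) - Polynomial.C α * P (n + 1)
            - Polynomial.C β * (Polynomial.X * P n) := by ring
      rw [hexp]
      rcases k with _ | k
      · -- k = 0
        simp only [Polynomial.coeff_sub, Polynomial.mul_coeff_zero, Polynomial.coeff_X_zero,
          Polynomial.coeff_C_mul, zero_mul, Polynomial.coeff_C_zero]
        have hc : PowerSeries.coeff (R := R) (n + 2) ((1 + PowerSeries.C (R := R) α * PowerSeries.X) * g) =
            PowerSeries.coeff (R := R) (n + 2) (1 - PowerSeries.C (R := R) β * PowerSeries.X) := by rw [hII]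
        have h3 : (1 + PowerSeries.C (R := R) α * PowerSeries.X) * g
            = g + PowerSeries.C (R := R) α * (PowerSeries.X * g) := by ring
        rw [h3] at hc
        simp only [map_add, map_sub, PowerSeries.coeff_C_mul, PowerSeries.coeff_succ_X_mul,
          PowerSeries.coeff_one, PowerSeries.coeff_X] at hc
        rw [if_neg (by omega : ¬ (n + 2 = 0)), if_neg (by omega : ¬ (n + 2 = 1))] at hc
        have hc' : PowerSeries.coeff (R := R) (n + 2) g = -(α * PowerSeries.coeff (R := R) (n + 1) g) := by
          linear_combination hc
        simp only [pow_zero, mul_one] at ih1 ⊢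
        rw [ih1 0]
        simp only [pow_zero, mul_one, hc']
        ring
      · -- k = k' + 1
        have hc : PowerSeries.coeff (R := R) (n + 2)
              ((1 + PowerSeries.C (R := R) α * PowerSeries.X) * (g * (PowerSeries.X * g) ^ (k + 1))) =
            PowerSeries.coeff (R := R) (n + 2) (PowerSeries.X *
              ((1 - PowerSeries.C (R := R) β * PowerSeries.X) * (g * (PowerSeries.X * g) ^ k))) := by
          rw [hI k]
        have h3 : (1 + PowerSeries.C (R := R) α * PowerSeries.X) * (g * (PowerSeries.X * g) ^ (k + 1))
            = g * (PowerSeries.X * g) ^ (k + 1)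
              + PowerSeries.C (R := R) α * (PowerSeries.X * (g * (PowerSeries.X * g) ^ (k + 1))) := by
          ring
        have h4 : (1 - PowerSeries.C (R := R) β * PowerSeries.X) * (g * (PowerSeries.X * g) ^ k)
            = g * (PowerSeries.X * g) ^ k
              - PowerSeries.C (R := R) β * (PowerSeries.X * (g * (PowerSeries.X * g) ^ k)) := by
          ring
        rw [h3, h4] at hc
        simp only [map_add, map_sub, PowerSeries.coeff_C_mul,
          PowerSeries.coeff_succ_X_mul] at hc
        -- hc : coeff (n+2) G(k+1) + α coeff (n+1) G(k+1) = coeff (n+1) G k - β coeff n G k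
        simp only [Polynomial.coeff_sub, Polynomial.coeff_X_mul, Polynomial.coeff_C_mul]
        rw [ih1 (k+1), ih1 k, ih2 k]
        linear_combination -hc
  -- conclude
  intro n k
  rw [Polynomial.coeff_derivative, key (n+1) (k+1)]
  have h5 : g * (PowerSeries.X * g) ^ (k + 1) =
      PowerSeries.X * (g ^ 2 * (PowerSeries.X * g) ^ k) := by
    rw [pow_succ]; ring
  rw [h5, PowerSeries.coeff_succ_X_mul]
  have h6 : (PowerSeries.X * (1 - PowerSeries.C (R := R) β * PowerSeries.X) * u)
      = PowerSeries.X * g := by rw [hg, mul_assoc]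
  rw [h6]
  ring
end

section
/- Let α, β, γ be commutative ring elements and define P_n by P_0=1, P_1=x-(α+β), P_n=(x-α)P_{n-1}(x)-β(x-γ)P_{n-2}(x). Then the coefficient array of the P_n is the Riordan array ((1-βx)/(1+αx-βγx^2), x(1-βx)/(1+αx-βγx^2)): for each n and k, [x^k]P_n(x) = [x^n]( (1-βx)/(1+αx-βγx^2) · (x(1-βx)/(1+αx-βγx^2))^k ). -/
/-!
The `k`-th column of the coefficient array, `c_k(x) = ∑ₙ [yᵏ]Pₙ(y) xⁿ`, satisfies
`D · c₀ = 1 - βx` and `D · c_{k+1} = x(1 - βx) · c_k` with `D = 1 + αx - βγx²`: this is the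
three-term recurrence read off coefficientwise, with the initial values `P₀, P₁` accounting for
the low-order terms. Since `D` is invertible, these identities determine every column, and the
Riordan columns `(1 - βx)/D · (x(1 - βx)/D)ᵏ` satisfy them too.
-/

open PowerSeries

section Riordan

variable {R : Type*} [CommRing R] (α β γ : R)

noncomputable def riordanDenom : R⟦X⟧ := 1 + C α * X - C (β * γ) * X ^ 2

lemma riordanDenom_mul (f : R⟦X⟧) :
    riordanDenom α β γ * f = f + C α * (X * f) - C (β * γ) * (X ^ 2 * f) := by
  rw [riordanDenom]; ring

@[simp]
lemma constantCoeff_riordanDenom_mul (f : R⟦X⟧) :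
    constantCoeff (riordanDenom α β γ * f) = constantCoeff f := by
  simp [riordanDenom]

@[simp]
lemma coeff_one_riordanDenom_mul (f : R⟦X⟧) :
    coeff 1 (riordanDenom α β γ * f) = coeff 1 f + α * constantCoeff f := by
  rw [riordanDenom_mul, map_sub, map_add, coeff_C_mul, coeff_C_mul, coeff_X_pow_mul']
  simp

@[simp]
lemma coeff_add_two_riordanDenom_mul (n : ℕ) (f : R⟦X⟧) :
    coeff (n + 2) (riordanDenom α β γ * f) =
      coeff (n + 2) f + α * coeff (n + 1) f - β * γ * coeff n f := by
  rw [riordanDenom_mul, map_sub, map_add, coeff_C_mul, coeff_C_mul, coeff_succ_X_mul,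
    coeff_X_pow_mul]

noncomputable def riordanColumn (k : ℕ) : R⟦X⟧ :=
  (1 - C β * X) * (riordanDenom α β γ).invOfUnit 1 *
    (X * (1 - C β * X) * (riordanDenom α β γ).invOfUnit 1) ^ k

lemma riordanDenom_mul_invOfUnit :
    riordanDenom α β γ * (riordanDenom α β γ).invOfUnit 1 = 1 :=
  mul_invOfUnit _ _ (by simp [riordanDenom])

lemma isUnit_riordanDenom : IsUnit (riordanDenom α β γ) :=
  IsUnit.of_mul_eq_one _ (riordanDenom_mul_invOfUnit α β γ)

lemma riordanDenom_mul_riordanColumn_zero :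
    riordanDenom α β γ * riordanColumn α β γ 0 = 1 - C β * X := by
  rw [riordanColumn, pow_zero, mul_one]
  linear_combination (1 - C β * X) * riordanDenom_mul_invOfUnit α β γ

lemma riordanDenom_mul_riordanColumn_succ (k : ℕ) :
    riordanDenom α β γ * riordanColumn α β γ (k + 1) =
      X * ((1 - C β * X) * riordanColumn α β γ k) := by
  have h : riordanColumn α β γ (k + 1) =
      X * (1 - C β * X) * riordanColumn α β γ k * (riordanDenom α β γ).invOfUnit 1 := by
    simp only [riordanColumn, pow_succ]; ring
  rw [h]
  linear_combination X * (1 - C β * X) * riordanColumn α β γ k *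
    riordanDenom_mul_invOfUnit α β γ

variable {α β γ}

lemma eq_riordanColumn_of_riordanDenom_mul {c : ℕ → R⟦X⟧}
    (h0 : riordanDenom α β γ * c 0 = 1 - C β * X)
    (hsucc : ∀ k, riordanDenom α β γ * c (k + 1) = X * ((1 - C β * X) * c k)) (k : ℕ) :
    c k = riordanColumn α β γ k := by
  have hD := isUnit_riordanDenom α β γ
  induction k with
  | zero => exact hD.mul_left_cancel (by rw [h0, riordanDenom_mul_riordanColumn_zero])
  | succ k ih =>
    exact hD.mul_left_cancel (by rw [hsucc, ih, riordanDenom_mul_riordanColumn_succ])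

noncomputable def columnSeries (P : ℕ → Polynomial R) (k : ℕ) : R⟦X⟧ :=
  mk fun n => (P n).coeff k

variable {P : ℕ → Polynomial R}

lemma riordanDenom_mul_columnSeries_zero (hP0 : P 0 = 1)
    (hP1 : P 1 = Polynomial.X - Polynomial.C (α + β))
    (hPrec : ∀ n, P (n + 2) =
      (Polynomial.X - Polynomial.C α) * P (n + 1)
        - Polynomial.C β * (Polynomial.X - Polynomial.C γ) * P n) :
    riordanDenom α β γ * columnSeries P 0 = 1 - C β * X := by
  ext n
  rcases n with _ | _ | n
  · simp [columnSeries, hP0]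
  · simp [columnSeries, hP0, hP1]
  · simp [columnSeries, hPrec]

lemma riordanDenom_mul_columnSeries_succ (hP0 : P 0 = 1)
    (hP1 : P 1 = Polynomial.X - Polynomial.C (α + β))
    (hPrec : ∀ n, P (n + 2) =
      (Polynomial.X - Polynomial.C α) * P (n + 1)
        - Polynomial.C β * (Polynomial.X - Polynomial.C γ) * P n) (k : ℕ) :
    riordanDenom α β γ * columnSeries P (k + 1) = X * ((1 - C β * X) * columnSeries P k) := by
  ext n
  rcases n with _ | _ | n
  · simp [columnSeries, hP0, Polynomial.coeff_one]
  · simp [columnSeries, hP0, hP1, Polynomial.coeff_one, Polynomial.coeff_X]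
  · simp [columnSeries, hPrec, sub_mul, mul_assoc, Polynomial.coeff_X_mul, coeff_succ_X_mul]
    ring

end Riordan

/-- The coefficient array of the generalized orthogonal polynomials `P_n` with
`P_0 = 1`, `P_1 = x-(α+β)`, `P_n = (x-α)P_{n-1} - β(x-γ)P_{n-2}` is the Riordan array
`((1-βx)/(1+αx-βγx²), x(1-βx)/(1+αx-βγx²))`. -/
theorem generalized_coeff_array {R : Type*} [CommRing R] (α β γ : R)
    (P : ℕ → Polynomial R)
    (hP0 : P 0 = 1)
    (hP1 : P 1 = Polynomial.X - Polynomial.C (α + β))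
    (hPrec : ∀ n, P (n + 2) =
      (Polynomial.X - Polynomial.C α) * P (n + 1)
        - Polynomial.C β * (Polynomial.X - Polynomial.C γ) * P n) :
    ∀ n k : ℕ, (P n).coeff k =
      PowerSeries.coeff n
        (((1 - PowerSeries.C β * PowerSeries.X) *
            PowerSeries.invOfUnit
              (1 + PowerSeries.C α * PowerSeries.X
                 - PowerSeries.C (β * γ) * PowerSeries.X ^ 2) 1) *
          (PowerSeries.X * (1 - PowerSeries.C β * PowerSeries.X) *
            PowerSeries.invOfUnit
              (1 + PowerSeries.C α * PowerSeries.X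
                 - PowerSeries.C (β * γ) * PowerSeries.X ^ 2) 1) ^ k) := by
  intro n k
  have hcolumn : columnSeries P k = riordanColumn α β γ k :=
    eq_riordanColumn_of_riordanDenom_mul (riordanDenom_mul_columnSeries_zero hP0 hP1 hPrec)
      (riordanDenom_mul_columnSeries_succ hP0 hP1 hPrec) k
  exact (coeff_mk n _).symm.trans (congrArg (coeff n) hcolumn)
end

section
/- The Riordan array identity ((1-βx)/(1+αx-βγx^2), x(1-βx)/(1+αx-βγx^2)) · (1/(1-γx), x/(1-γx)) = ((1-βx)/(1+(α-γ)x), x(1-βx)/(1+(α-γ)x)) holds. Equivalently, writing f(x)=x(1-βx)/(1+αx-βγx^2), one has (1-βx)/(1+αx-βγx^2) · 1/(1-γ f(x)) = (1-βx)/(1+(α-γ)x) and f(x)/(1-γf(x)) = x(1-βx)/(1+(α-γ)x) as formal power series. -/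
/-!
Write `A = 1 + αx - βγx²`, `B = 1 - βx` and `D = 1 + (α - γ)x`, so that `f = xB/A`.
The denominators are related by `A - γxB = D`, hence `1 - γf = D/A` and `1/(1 - γf) = A/D`;
multiplying `B/A` and `xB/A` by `A/D` gives both identities.
-/

open PowerSeries

namespace PowerSeries

variable {R : Type*} [CommRing R]

theorem invOfUnit_one_eq_of_mul_eq_one {φ ψ : R⟦X⟧} (hφ : constantCoeff φ = 1)
    (h : φ * ψ = 1) : invOfUnit φ 1 = ψ :=
  left_inv_eq_right_inv (invOfUnit_mul φ 1 (by simpa using hφ)) h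

theorem one_sub_mul_invOfUnit_one {φ : R⟦X⟧} (hφ : constantCoeff φ = 1) (ψ : R⟦X⟧) :
    1 - ψ * invOfUnit φ 1 = (φ - ψ) * invOfUnit φ 1 := by
  linear_combination -(mul_invOfUnit φ 1 (by simpa using hφ))

theorem invOfUnit_mul_invOfUnit_one {φ ψ : R⟦X⟧} (hφ : constantCoeff φ = 1)
    (hψ : constantCoeff ψ = 1) :
    invOfUnit (ψ * invOfUnit φ 1) 1 = φ * invOfUnit ψ 1 := by
  apply invOfUnit_one_eq_of_mul_eq_one (by simp [hψ])
  linear_combination (ψ * invOfUnit ψ 1) * mul_invOfUnit φ 1 (by simpa using hφ) +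
    mul_invOfUnit ψ 1 (by simpa using hψ)

end PowerSeries

/-- Riordan array identity
`((1-βx)/(1+αx-βγx²), x(1-βx)/(1+αx-βγx²)) · (1/(1-γx), x/(1-γx))
  = ((1-βx)/(1+(α-γ)x), x(1-βx)/(1+(α-γ)x))`:
with `f(x) = x(1-βx)/(1+αx-βγx²)`, one has
`(1-βx)/(1+αx-βγx²) · 1/(1-γf(x)) = (1-βx)/(1+(α-γ)x)` and
`f(x)/(1-γf(x)) = x(1-βx)/(1+(α-γ)x)`. -/
theorem generalized_riordan_shift {R : Type*} [CommRing R] (α β γ : R)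
    (f : PowerSeries R)
    (hf : f = PowerSeries.X * (1 - PowerSeries.C β * PowerSeries.X) *
      PowerSeries.invOfUnit
        (1 + PowerSeries.C α * PowerSeries.X
           - PowerSeries.C (β * γ) * PowerSeries.X ^ 2) 1) :
    ((1 - PowerSeries.C β * PowerSeries.X) *
        PowerSeries.invOfUnit
          (1 + PowerSeries.C α * PowerSeries.X
             - PowerSeries.C (β * γ) * PowerSeries.X ^ 2) 1) *
        PowerSeries.invOfUnit (1 - PowerSeries.C γ * f) 1 =
      (1 - PowerSeries.C β * PowerSeries.X) *
        PowerSeries.invOfUnit (1 + PowerSeries.C (α - γ) * PowerSeries.X) 1 ∧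
    f * PowerSeries.invOfUnit (1 - PowerSeries.C γ * f) 1 =
      PowerSeries.X * (1 - PowerSeries.C β * PowerSeries.X) *
        PowerSeries.invOfUnit (1 + PowerSeries.C (α - γ) * PowerSeries.X) 1 := by
  set A : R⟦X⟧ := 1 + C α * X - C (β * γ) * X ^ 2
  set B : R⟦X⟧ := 1 - C β * X
  set D : R⟦X⟧ := 1 + C (α - γ) * X
  have hA : constantCoeff A = 1 := by simp [A]
  have hD : constantCoeff D = 1 := by simp [D]
  have denominators : A - C γ * (X * B) = D := by
    simp only [A, B, D, map_sub, map_mul]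
    ring
  have inv_one_sub : invOfUnit (1 - C γ * f) 1 = A * invOfUnit D 1 := by
    rw [hf, ← mul_assoc, one_sub_mul_invOfUnit_one hA, denominators,
      invOfUnit_mul_invOfUnit_one hA hD]
  have hAA : A * invOfUnit A 1 = 1 := mul_invOfUnit A 1 (by simpa using hA)
  rw [inv_one_sub, hf]
  constructor
  · linear_combination (B * invOfUnit D 1) * hAA
  · linear_combination (X * B * invOfUnit D 1) * hAA
end

section
/- Let Q_n be the orthogonal polynomials defined by Q_0=1, Q_1=x-(α+β), Q_n=(x-(α+2β))Q_{n-1}-β(α+β)Q_{n-2}. Then the coefficient array of the Q_n is the Riordan array (1/(1+(α+β)x), x/((1+βx)(1+(α+β)x))): for all n, k, [x^k]Q_n(x) = [x^n]( (1/(1+(α+β)x)) · (x/((1+βx)(1+(α+β)x)))^k ). -/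
/-!
With `u = (1 + βx)(1 + (α+β)x) = 1 + (α+2β)x + β(α+β)x²`, the Riordan array is
`T(n,k) = [xⁿ] g·(x h)ᵏ` where `u g = 1 + βx` and `u h = 1`. Multiplying by `u` turns
`g·(x h)ᵏ⁺¹` into `x·g·(x h)ᵏ`, while `u g` has no terms of degree `≥ 2`; comparing coefficients
of `xⁿ⁺²` shows that the row series `∑ₖ T(n,k) yᵏ` satisfy the three-term recurrence of the `Qₙ`.
The first two rows are `1` and `y - (α+β)`, so the rows are the `Qₙ`.
-/

namespace PowerSeries

variable {R : Type*} [CommRing R]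

theorem coeff_add_two_quadratic_mul (c d : R) (S : R⟦X⟧) (n : ℕ) :
    coeff (n + 2) ((1 + C c * X + C d * X ^ 2) * S) =
      coeff (n + 2) S + c * coeff (n + 1) S + d * coeff n S := by
  have hX2 : X ^ 2 * S = X * (X * S) := by ring
  rw [add_mul, add_mul, one_mul, mul_assoc, mul_assoc, hX2, map_add, map_add, coeff_C_mul,
    coeff_C_mul, coeff_succ_X_mul, coeff_succ_X_mul, coeff_succ_X_mul]

theorem coeff_one_invOfUnit_one (φ : R⟦X⟧) (hφ : constantCoeff φ = 1) :
    coeff 1 (invOfUnit φ 1) = -coeff 1 φ := by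
  have h := congrArg (coeff 1) (mul_invOfUnit φ 1 (by simpa using hφ))
  rw [coeff_one_mul, constantCoeff_invOfUnit, hφ, coeff_one, if_neg one_ne_zero] at h
  simp only [inv_one, Units.val_one, mul_one] at h
  linear_combination h

/-- Row `n` of the Riordan array `(g, X * h)`, as a series in the column index. -/
noncomputable def riordanRow (g h : R⟦X⟧) (n : ℕ) : R⟦X⟧ :=
  mk fun k => coeff n (g * (X * h) ^ k)

variable (g h : R⟦X⟧)

@[simp]
theorem coeff_riordanRow (n k : ℕ) : coeff k (riordanRow g h n) = coeff n (g * (X * h) ^ k) :=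
  coeff_mk _ _

theorem coeff_mul_X_mul_pow (n k : ℕ) :
    coeff n (g * (X * h) ^ k) = if k ≤ n then coeff (n - k) (g * h ^ k) else 0 := by
  rw [mul_pow, mul_left_comm, coeff_X_pow_mul']

theorem riordanRow_zero : riordanRow g h 0 = C (constantCoeff g) := by
  ext k
  cases k <;> simp [coeff_mul_X_mul_pow, coeff_C]

theorem riordanRow_one :
    riordanRow g h 1 = C (coeff 1 g) + C (constantCoeff g * constantCoeff h) * X := by
  ext k
  rw [coeff_riordanRow, coeff_mul_X_mul_pow]
  rcases k with _ | _ | k <;> simp [coeff_C]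

theorem riordanRow_add_two {c d e : R} (hg : (1 + C c * X + C d * X ^ 2) * g = 1 + C e * X)
    (hh : (1 + C c * X + C d * X ^ 2) * h = 1) (n : ℕ) :
    riordanRow g h (n + 2) = (X - C c) * riordanRow g h (n + 1) - C d * riordanRow g h n := by
  ext k
  rw [sub_mul, map_sub, map_sub, coeff_C_mul, coeff_C_mul]
  rcases k with _ | k
  · have hcol := coeff_add_two_quadratic_mul c d g n
    rw [hg] at hcol
    simp only [coeff_riordanRow, coeff_zero_X_mul, pow_zero, mul_one]
    simp only [map_add, coeff_one, coeff_succ_mul_X, coeff_succ_C, Nat.add_eq_zero_iff,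
      OfNat.ofNat_ne_zero, and_false, if_false, add_zero] at hcol
    linear_combination -hcol
  · have hcol := coeff_add_two_quadratic_mul c d (g * (X * h) ^ (k + 1)) n
    have hshift : (1 + C c * X + C d * X ^ 2) * (g * (X * h) ^ (k + 1)) =
        X * (g * (X * h) ^ k) := by
      linear_combination (X * g * (X * h) ^ k) * hh
    rw [hshift, coeff_succ_X_mul] at hcol
    simp only [coeff_riordanRow, coeff_succ_X_mul]
    linear_combination -hcol

end PowerSeries

open PowerSeries

/-- The coefficient array of the orthogonal polynomials `Q_n` with `Q_0 = 1`,
`Q_1 = x-(α+β)`, `Q_n = (x-(α+2β))Q_{n-1} - β(α+β)Q_{n-2}` is the Riordan array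
`(1/(1+(α+β)x), x/((1+βx)(1+(α+β)x)))`. -/
theorem orthogonal_coeff_array {R : Type*} [CommRing R] (α β : R)
    (Q : ℕ → Polynomial R)
    (hQ0 : Q 0 = 1)
    (hQ1 : Q 1 = Polynomial.X - Polynomial.C (α + β))
    (hQrec : ∀ n, Q (n + 2) =
      (Polynomial.X - Polynomial.C (α + 2 * β)) * Q (n + 1)
        - Polynomial.C (β * (α + β)) * Q n) :
    ∀ n k : ℕ, (Q n).coeff k =
      PowerSeries.coeff n
        ((PowerSeries.invOfUnit (1 + PowerSeries.C (α + β) * PowerSeries.X) 1) *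
          (PowerSeries.X *
            PowerSeries.invOfUnit
              ((1 + PowerSeries.C β * PowerSeries.X) *
                (1 + PowerSeries.C (α + β) * PowerSeries.X)) 1) ^ k) := by
  set g := invOfUnit (1 + C (α + β) * X) 1
  set u := (1 + C β * X) * (1 + C (α + β) * X)
  set h := invOfUnit u 1
  have hu : 1 + C (α + 2 * β) * X + C (β * (α + β)) * X ^ 2 = u := by
    simp only [u, map_add, map_mul, map_ofNat]
    ring
  have hg : u * g = 1 + C β * X := by
    change (1 + C β * X) * (1 + C (α + β) * X) * g = _
    rw [mul_assoc, mul_invOfUnit _ 1 (by simp), mul_one]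
  have hh : u * h = 1 := mul_invOfUnit _ 1 (by simp [u])
  have hg₀ : constantCoeff g = 1 := by simp [g]
  have hh₀ : constantCoeff h = 1 := by simp [h]
  have hrow : ∀ n, (Q n : R⟦X⟧) = riordanRow g h n := by
    intro n
    induction n using Nat.twoStepInduction with
    | zero => rw [hQ0, riordanRow_zero, hg₀, map_one, Polynomial.coe_one]
    | one =>
      rw [hQ1, riordanRow_one, hg₀, hh₀, coeff_one_invOfUnit_one _ (by simp)]
      simp [sub_eq_neg_add]
    | more n ih₀ ih₁ =>
      rw [hQrec, riordanRow_add_two g h (hu ▸ hg) (hu ▸ hh), ← ih₀, ← ih₁]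
      simp
  intro n k
  rw [← Polynomial.coeff_coe, hrow, coeff_riordanRow]
end

section
/- Define P_n(x) ∈ ℤ[x] by P_0=1, P_1=x-2, P_n=(x-1)P_{n-1}-xP_{n-2}. Then ∑_{n≥0} P_n(t)x^n = (1-x)/(1+(1-t)x+tx^2) in ℤ[t][[x]], and the moments, i.e., the coefficients of the first column of the inverse coefficient matrix, are the large Schröder numbers: [x^n] v(x)/x = ∑_{k=0}^n C(n+k,2k)Cat(k), where v = Rev(x(1-x)/(1+x)). -/
/-!
The generating function is the usual one for a sequence with a two-term linear recurrence.

The equation `v (1 - v) = x (1 + v)` has at most one solution with `v(0) = 0`: the difference `d`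
of two solutions `v, w` satisfies `d (1 - x - v - w) = 0`, and the second factor is a unit.
Mathlib's large Schröder series `L` satisfies `L = 1 + x L + x L²`, so `v = x L`. The explicit
sum `∑ C(n+k,2k) Cat(k)` obeys the same recurrence `L_{n+1} = L_n + ∑_{i+j=n} L_i L_j`: Pascal's
rule identifies `L_{n+1} - L_n`, and in the convolution the inner sums over `i + j = n` collapse
by the Chu–Vandermonde identity `∑_{i+j=n} C(i+k,2k) C(j+l,2l) = C(n+k+l+1, 2(k+l)+1)`, after
which Catalan's recurrence applies.
-/

open Finset PowerSeries

namespace Finset.Nat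

variable {M : Type*} [AddCommMonoid M]

theorem sum_antidiagonal_add_left {a : ℕ} {f : ℕ × ℕ → M}
    (hf : ∀ i j, i < a → f (i, j) = 0) (n : ℕ) :
    ∑ p ∈ antidiagonal (n + a), f p = ∑ p ∈ antidiagonal n, f (p.1 + a, p.2) := by
  induction a generalizing f with
  | zero => rfl
  | succ a ih =>
    rw [← add_assoc, sum_antidiagonal_succ, hf 0 _ a.succ_pos, zero_add,
      ih fun i j hi => hf (i + 1) j (by omega)]
    simp only [add_assoc]

theorem sum_antidiagonal_add_right {b : ℕ} {f : ℕ × ℕ → M}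
    (hf : ∀ i j, j < b → f (i, j) = 0) (n : ℕ) :
    ∑ p ∈ antidiagonal (n + b), f p = ∑ p ∈ antidiagonal n, f (p.1, p.2 + b) := by
  rw [← sum_antidiagonal_swap, sum_antidiagonal_add_left (fun i j hj => hf j i hj),
    ← sum_antidiagonal_swap]
  rfl

theorem sum_range_sum_range_eq_sum_antidiagonal {N : ℕ} {f : ℕ → ℕ → M}
    (hf : ∀ k l, N ≤ k + l → f k l = 0) :
    ∑ k ∈ range N, ∑ l ∈ range N, f k l =
      ∑ m ∈ range N, ∑ p ∈ antidiagonal m, f p.1 p.2 := by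
  rw [← sum_product', ← sum_filter_of_ne (p := fun p => p.1 + p.2 < N)
    fun p _ hp => by by_contra h; exact hp (hf _ _ (by omega)),
    ← sum_fiberwise_of_maps_to (g := fun p => p.1 + p.2) (t := range N) (by simp)]
  refine sum_congr rfl fun m hm => sum_congr ?_ fun _ _ => rfl
  ext ⟨k, l⟩
  simp only [mem_range] at hm
  simp only [mem_filter, mem_product, mem_range, HasAntidiagonal.mem_antidiagonal]
  omega

end Finset.Nat

namespace Nat

theorem sum_antidiagonal_choose_mul_choose (p q n : ℕ) :
    ∑ ij ∈ antidiagonal n, ij.1.choose p * ij.2.choose q = (n + 1).choose (p + q + 1) := by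
  induction n generalizing q with
  | zero =>
    rcases p with _ | p <;> rcases q with _ | q <;> simp <;> rw [choose_eq_zero_of_lt (by omega)]
  | succ n ih =>
    rw [Finset.Nat.sum_antidiagonal_succ']
    rcases q with _ | q
    · have h0 := ih 0
      simp only [choose_zero_right, mul_one, add_zero] at h0 ⊢
      rw [h0, ← choose_succ_succ']
    · simp only [choose_succ_succ' _ q, mul_add, sum_add_distrib, ih, choose_zero_succ,
        mul_zero, zero_add]
      rw [show p + (q + 1) + 1 = p + q + 1 + 1 by omega, choose_succ_succ' (n + 1)]

theorem sum_antidiagonal_add_choose_mul_add_choose {a b p q : ℕ} (ha : a ≤ p) (hb : b ≤ q)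
    (n : ℕ) : ∑ ij ∈ antidiagonal n, (ij.1 + a).choose p * (ij.2 + b).choose q =
      (n + a + b + 1).choose (p + q + 1) := by
  rw [← sum_antidiagonal_choose_mul_choose, add_right_comm,
    Finset.Nat.sum_antidiagonal_add_left fun i j hi => by
      rw [choose_eq_zero_of_lt (show i < p by omega), zero_mul],
    Finset.Nat.sum_antidiagonal_add_right fun i j hj => by
      rw [choose_eq_zero_of_lt (show j < q by omega), mul_zero]]

def schroderSum (n : ℕ) : ℕ := ∑ k ∈ range (n + 1), (n + k).choose (2 * k) * catalan k

theorem schroderSum_eq_sum_range {n N : ℕ} (h : n < N) :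
    schroderSum n = ∑ k ∈ range N, (n + k).choose (2 * k) * catalan k :=
  sum_subset (range_subset_range.2 h) fun k _ hk => by
    rw [choose_eq_zero_of_lt (by simp at hk; omega), zero_mul]

theorem schroderSum_succ (n : ℕ) : schroderSum (n + 1) =
    schroderSum n + ∑ m ∈ range (n + 1), (n + m + 1).choose (2 * m + 1) * catalan (m + 1) := by
  have pascal (m : ℕ) : (n + 1 + (m + 1)).choose (2 * (m + 1)) =
      (n + m + 1).choose (2 * m + 1) + (n + (m + 1)).choose (2 * (m + 1)) := by
    rw [show n + 1 + (m + 1) = n + m + 1 + 1 by omega, show 2 * (m + 1) = 2 * m + 1 + 1 by omega,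
      choose_succ_succ', add_assoc n m 1]
  rw [schroderSum, schroderSum_eq_sum_range (N := n + 2) (by omega), sum_range_succ',
    sum_range_succ' _ (n + 1)]
  simp only [pascal, add_mul, sum_add_distrib, mul_zero, choose_zero_right]
  ring

theorem sum_antidiagonal_schroderSum_mul (n : ℕ) :
    ∑ p ∈ antidiagonal n, schroderSum p.1 * schroderSum p.2 =
      ∑ m ∈ range (n + 1), (n + m + 1).choose (2 * m + 1) * catalan (m + 1) :=
  calc ∑ p ∈ antidiagonal n, schroderSum p.1 * schroderSum p.2
    _ = ∑ p ∈ antidiagonal n, ∑ k ∈ range (n + 1), ∑ l ∈ range (n + 1),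
          (p.1 + k).choose (2 * k) * (p.2 + l).choose (2 * l) * (catalan k * catalan l) :=
      sum_congr rfl fun p hp => by
        rw [schroderSum_eq_sum_range (Finset.Nat.antidiagonal.fst_lt hp),
          schroderSum_eq_sum_range (Finset.Nat.antidiagonal.snd_lt hp), sum_mul_sum]
        exact sum_congr rfl fun k _ => sum_congr rfl fun l _ => by ring
    _ = ∑ k ∈ range (n + 1), ∑ l ∈ range (n + 1),
          (n + k + l + 1).choose (2 * k + 2 * l + 1) * (catalan k * catalan l) := by
      rw [sum_comm]
      refine sum_congr rfl fun k _ => ?_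
      rw [sum_comm]
      refine sum_congr rfl fun l _ => ?_
      rw [← sum_mul, sum_antidiagonal_add_choose_mul_add_choose (by omega) (by omega)]
    _ = ∑ m ∈ range (n + 1), ∑ p ∈ antidiagonal m,
          (n + p.1 + p.2 + 1).choose (2 * p.1 + 2 * p.2 + 1) * (catalan p.1 * catalan p.2) :=
      Finset.Nat.sum_range_sum_range_eq_sum_antidiagonal fun k l h => by
        rw [choose_eq_zero_of_lt (by omega), zero_mul]
    _ = ∑ m ∈ range (n + 1), (n + m + 1).choose (2 * m + 1) * catalan (m + 1) :=
      sum_congr rfl fun m _ => by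
        rw [catalan_succ', mul_sum]
        refine sum_congr rfl fun p hp => ?_
        have hm : p.1 + p.2 = m := mem_antidiagonal.1 hp
        rw [show n + p.1 + p.2 + 1 = n + m + 1 by omega,
          show 2 * p.1 + 2 * p.2 + 1 = 2 * m + 1 by omega]

theorem largeSchroder_eq_schroderSum (n : ℕ) : largeSchroder n = schroderSum n := by
  induction n using Nat.strong_induction_on with
  | _ n ih =>
    rcases n with _ | n
    · simp [schroderSum]
    · rw [largeSchroder_succ, schroderSum_succ, ← sum_antidiagonal_schroderSum_mul,
        Finset.Nat.sum_antidiagonal_eq_sum_range_succ (fun i j => schroderSum i * schroderSum j),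
        range_succ_eq_Iic, ih n (lt_add_one n)]
      exact congrArg _ <| sum_congr rfl fun i hi => by
        rw [ih i (by simp at hi; omega), ih (n - i) (by omega)]

end Nat

namespace PowerSeries

variable {R : Type*} [CommRing R]

theorem mk_mul_one_sub_C_mul_X_sub_C_mul_X_sq {p : ℕ → R} {a b : R}
    (hp : ∀ n, p (n + 2) = a * p (n + 1) + b * p n) :
    mk p * (1 - C a * X - C b * X ^ 2) = C (p 0) + C (p 1 - a * p 0) * X := by
  rw [show mk p * (1 - C a * X - C b * X ^ 2) = mk p - C a * mk p * X - C b * mk p * X ^ 2 by ring]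
  ext n
  rcases n with _ | _ | n
  all_goals simp [pow_two, ← mul_assoc, coeff_succ_mul_X, hp]

theorem eq_of_mul_one_sub_eq_X_mul_one_add {v w : R⟦X⟧} (hv0 : constantCoeff v = 0)
    (hw0 : constantCoeff w = 0) (hv : v * (1 - v) = X * (1 + v))
    (hw : w * (1 - w) = X * (1 + w)) : v = w := by
  have hunit : IsUnit (1 - X - v - w) := isUnit_iff_constantCoeff.2 (by simp [hv0, hw0])
  have hfactor : (v - w) * (1 - X - v - w) = 0 := by linear_combination hv - hw
  exact sub_eq_zero.1 (hunit.mul_left_eq_zero.1 hfactor)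

theorem X_mul_map_largeSchroderSeries_mul_one_sub :
    X * map (Nat.castRingHom R) largeSchroderSeries *
        (1 - X * map (Nat.castRingHom R) largeSchroderSeries) =
      (X : R⟦X⟧) * (1 + X * map (Nat.castRingHom R) largeSchroderSeries) := by
  have hL := congrArg (map (Nat.castRingHom R))
    largeSchroderSeries_eq_one_add_X_mul_largeSchroderSeries_add_X_mul_largeSchroderSeries_sq
  simp only [map_add, map_mul, map_pow, map_one, map_X] at hL
  linear_combination X * hL

theorem coeff_succ_eq_largeSchroder {v : R⟦X⟧} (hv0 : constantCoeff v = 0)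
    (hv : v * (1 - v) = X * (1 + v)) (n : ℕ) : coeff (n + 1) v = Nat.largeSchroder n := by
  rw [eq_of_mul_one_sub_eq_X_mul_one_add hv0 (by simp) hv X_mul_map_largeSchroderSeries_mul_one_sub,
    coeff_succ_X_mul, coeff_map, coeff_largeSchroderSeries, eq_natCast]

end PowerSeries

/-- For the Laurent biorthogonal polynomials with `α = β = 1`
(`P_0 = 1`, `P_1 = x-2`, `P_n = (x-1)P_{n-1} - x P_{n-2}`):
the generating function identity `∑ P_n(t) xⁿ = (1-x)/(1+(1-t)x+tx²)` holds in
`ℤ[t][[x]]`, and the moments are the large Schröder numbers: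
`[x^{n+1}] v = ∑_{k=0}^n C(n+k,2k)·Cat(k)` where `v = Rev(x(1-x)/(1+x))`
(characterized by `v(0)=0` and `v(1-v) = x(1+v)`). -/
theorem schroder_moments (P : ℕ → Polynomial ℤ)
    (hP0 : P 0 = 1)
    (hP1 : P 1 = Polynomial.X - 2)
    (hPrec : ∀ n, P (n + 2) =
      (Polynomial.X - 1) * P (n + 1) - Polynomial.X * P n)
    (v : PowerSeries ℚ)
    (hv0 : PowerSeries.constantCoeff (R := ℚ) v = 0)
    (hv : v * (1 - v) = PowerSeries.X * (1 + v)) :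
    PowerSeries.mk (fun n => P n) =
      (1 - PowerSeries.C (R := Polynomial ℤ) 1 * PowerSeries.X) *
        PowerSeries.invOfUnit
          (1 + PowerSeries.C (R := Polynomial ℤ) (1 - Polynomial.X) * PowerSeries.X
             + PowerSeries.C (R := Polynomial ℤ) Polynomial.X * PowerSeries.X ^ 2) 1 ∧
    ∀ n : ℕ, PowerSeries.coeff (R := ℚ) (n + 1) v =
      ((∑ k ∈ Finset.range (n + 1), (n + k).choose (2 * k) * catalan k : ℕ) : ℚ) := by
  refine ⟨?_, fun n => ?_⟩
  · set U : PowerSeries (Polynomial ℤ) := 1 + C (1 - Polynomial.X) * X + C Polynomial.X * X ^ 2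
    have hU : U = 1 - C (Polynomial.X - 1) * X - C (-Polynomial.X) * X ^ 2 := by
      simp only [U, map_sub, map_neg, map_one]
      ring
    have hPU : mk (fun n => P n) * U = 1 - C 1 * X := by
      rw [hU, mk_mul_one_sub_C_mul_X_sub_C_mul_X_sq fun n => by rw [hPrec]; ring, hP0, hP1,
        show Polynomial.X - 2 - (Polynomial.X - 1) * 1 = (-1 : Polynomial ℤ) by ring,
        map_neg, map_one]
      ring
    calc mk (fun n => P n) = mk (fun n => P n) * (U * invOfUnit U 1) := by
          rw [mul_invOfUnit U 1 (by simp [U]), mul_one]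
      _ = (1 - C 1 * X) * invOfUnit U 1 := by rw [← mul_assoc, hPU]
  · rw [coeff_succ_eq_largeSchroder hv0 hv, Nat.largeSchroder_eq_schroderSum]
    rfl
end
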